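/- arXiv:2006.03864 — 8 statements merged into one kernel-verified Lean document; each statement's English description precedes it below -/
import Mathlib

section
/- Let (F_k)_{k≥0} be a filtration on a probability space and let M_1, M_2, … be random variables taking values in [0,1] such that M_k is F_k-measurable for every k ≥ 1. Define μ_k := E[M_k | F_{k−1}]. Then for any p ∈ (0,1) and any c ≥ 1, setting ι := ln(2/p), one has P[ ∃ n ≥ 1 : Σ_{k=1}^n μ_k ≥ 4cι and Σ_{k=1}^n M_k ≤ cι ] ≤ p. -/
open MeasureTheory Finset

section Aux
lemma supermart_maximal {Ω : Type*} {m0 : MeasurableSpace Ω} {μ : Measure Ω}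
    [IsFiniteMeasure μ] {𝒢 : Filtration ℕ m0} {Z : ℕ → Ω → ℝ}
    (hZ : Supermartingale Z 𝒢 μ) (hpos : ∀ n ω, 0 ≤ Z n ω) {ε : ℝ} (hε : 0 < ε) :
    μ {ω | ∃ n, ε ≤ Z n ω} ≤ ENNReal.ofReal ((∫ ω, Z 0 ω ∂μ) / ε) := by
  set S : ℕ → Set Ω := fun n => {ω | ∃ k ≤ n, ε ≤ Z k ω} with hS
  have hSm : ∀ n, MeasurableSet (S n) := by
    intro n
    have : S n = ⋃ k, ⋃ _ : k ≤ n, {ω | ε ≤ Z k ω} := by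
      ext ω; simp [hS]
    rw [this]
    exact MeasurableSet.iUnion fun k => MeasurableSet.iUnion fun _ =>
      measurableSet_le measurable_const ((hZ.1 k).measurable.le (𝒢.le k))
  have hint0 : (0:ℝ) ≤ ∫ ω, Z 0 ω ∂μ := integral_nonneg fun ω => hpos 0 ω
  have key : ∀ n, μ (S n) ≤ ENNReal.ofReal ((∫ ω, Z 0 ω ∂μ) / ε) := by
    intro n
    set τ : Ω → WithTop ℕ := fun ω => ((hittingBtwn Z {y : ℝ | ε ≤ y} 0 n ω : ℕ) : WithTop ℕ) with hτdef
    have hτ : IsStoppingTime 𝒢 τ := hZ.stronglyAdapted.adapted.isStoppingTime_hittingBtwn measurableSet_Ici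
    have hτle : ∀ ω, τ ω ≤ n := fun ω => WithTop.coe_le_coe.2 (hittingBtwn_le ω)
    have hneg : Integrable (stoppedValue (-Z) τ) μ :=
      hZ.neg.integrable_stoppedValue hτ hτle
    have heq : stoppedValue (-Z) τ = -(stoppedValue Z τ) := by
      funext ω; simp [stoppedValue]
    have hτint : Integrable (stoppedValue Z τ) μ := by
      rw [heq] at hneg; simpa using hneg.neg
    have hEτ : ∫ ω, stoppedValue Z τ ω ∂μ ≤ ∫ ω, Z 0 ω ∂μ := by
      have h := hZ.neg.expected_stoppedValue_mono (isStoppingTime_const 𝒢 0) hτ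
        (fun ω => WithTop.coe_le_coe.2 (Nat.zero_le _)) hτle
      have h0 : stoppedValue (-Z) (fun _ => ((0:ℕ) : WithTop ℕ)) = fun ω => -(Z 0 ω) := by
        funext ω; simp [stoppedValue]
      erw [h0] at h
      rw [heq] at h
      simp only [Pi.neg_apply] at h
      rw [integral_neg, integral_neg] at h
      linarith
    have hpt : ∀ ω ∈ S n, ε ≤ stoppedValue Z τ ω := by
      intro ω hω
      obtain ⟨k, hk, hεk⟩ := hω
      exact stoppedValue_hittingBtwn_mem ⟨k, ⟨Nat.zero_le _, hk⟩, hεk⟩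
    have h2 : ε * (μ (S n)).toReal ≤ ∫ ω in S n, stoppedValue Z τ ω ∂μ :=
      by have h := setIntegral_ge_of_const_le (hSm n) (measure_ne_top μ _) hpt hτint.integrableOn
         rw [smul_eq_mul, mul_comm] at h; exact h
    have h3 : ∫ ω in S n, stoppedValue Z τ ω ∂μ ≤ ∫ ω, stoppedValue Z τ ω ∂μ :=
      setIntegral_le_integral hτint (Filter.Eventually.of_forall fun ω => hpos _ ω)
    rw [ENNReal.le_ofReal_iff_toReal_le (measure_ne_top μ _) (div_nonneg hint0 hε.le)]
    rw [le_div_iff₀ hε]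
    nlinarith [h2, h3, hEτ]
  have hU : {ω | ∃ n, ε ≤ Z n ω} = ⋃ n, S n := by
    ext ω
    simp only [Set.mem_setOf_eq, Set.mem_iUnion, hS]
    exact ⟨fun ⟨n, hn⟩ => ⟨n, n, le_rfl, hn⟩, fun ⟨n, k, _, hk⟩ => ⟨k, hk⟩⟩
  rw [hU]
  have hmono : Monotone S := fun a b hab ω ⟨k, hk, hεk⟩ => ⟨k, hk.trans hab, hεk⟩
  rw [hmono.directed_le.measure_iUnion]
  exact iSup_le key

end Aux

/-- Let `(ℱ k)` be a filtration on a probability space and `M 1, M 2, …`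
be `[0,1]`-valued random variables with `M k` measurable w.r.t. `ℱ k`.  With
`μ_k := E[M k | ℱ (k-1)]`, for any `p ∈ (0,1)` and `c ≥ 1`, setting `ι := log (2/p)`,
`P[∃ n ≥ 1, ∑_{k=1}^n μ_k ≥ 4cι ∧ ∑_{k=1}^n M k ≤ cι] ≤ p`. -/
theorem stmt0 {Ω : Type*} {m0 : MeasurableSpace Ω} {μ : Measure Ω} [IsProbabilityMeasure μ]
    (ℱ : Filtration ℕ m0) (M : ℕ → Ω → ℝ)
    (hmeas : ∀ k, 1 ≤ k → StronglyMeasurable[ℱ k] (M k))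
    (hbdd : ∀ k, 1 ≤ k → ∀ ω, M k ω ∈ Set.Icc (0 : ℝ) 1)
    (p c : ℝ) (hp : p ∈ Set.Ioo (0 : ℝ) 1) (hc : 1 ≤ c) :
    μ {ω | ∃ n : ℕ, 1 ≤ n ∧
        4 * c * Real.log (2 / p) ≤ ∑ k ∈ Finset.Icc 1 n, (μ[M k | ℱ (k - 1)]) ω ∧
        ∑ k ∈ Finset.Icc 1 n, M k ω ≤ c * Real.log (2 / p)}
      ≤ ENNReal.ofReal p := by
  obtain ⟨hp0, hp1⟩ := hp
  set ι := Real.log (2 / p) with hιdef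
  have hι2 : Real.log 2 ≤ ι := by
    apply Real.log_le_log (by norm_num)
    rw [le_div_iff₀ hp0]; nlinarith
  have hln2pos : (0:ℝ) ≤ Real.log 2 := Real.log_nonneg one_le_two
  have hln2lt : Real.log 2 ≤ 1 := by
    have := Real.log_two_lt_d9; linarith
  have hιpos : (0:ℝ) < ι := lt_of_lt_of_le (Real.log_pos one_lt_two) hι2
  set ν : ℕ → Ω → ℝ := fun k => μ[M k | ℱ (k - 1)] with hν
  set g : ℕ → Ω → ℝ :=
    fun n ω => (1/2) * ∑ k ∈ Icc 1 n, ν k ω - Real.log 2 * ∑ k ∈ Icc 1 n, M k ω with hg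
  set Z : ℕ → Ω → ℝ := fun n ω => Real.exp (g n ω) with hZdef
  have hZpos : ∀ n ω, (0:ℝ) ≤ Z n ω := fun n ω => (Real.exp_pos _).le
  -- integrability of M k
  have hMint : ∀ k, 1 ≤ k → Integrable (M k) μ := by
    intro k hk
    refine Integrable.mono' (integrable_const (1:ℝ))
      ((hmeas k hk).mono (ℱ.le k)).aestronglyMeasurable
      (Filter.Eventually.of_forall fun ω => ?_)
    have h := hbdd k hk ω
    rw [Real.norm_eq_abs, abs_le]
    exact ⟨by linarith [h.1], h.2⟩
  -- ν bounds a.e.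
  have hν01 : ∀ k, 1 ≤ k → ∀ᵐ ω ∂μ, 0 ≤ ν k ω ∧ ν k ω ≤ 1 := by
    intro k hk
    have h0 : (0:Ω → ℝ) ≤ᵐ[μ] ν k :=
      condExp_nonneg (Filter.Eventually.of_forall fun ω => (hbdd k hk ω).1)
    have h1 := condExp_mono (m := ℱ (k-1)) (hMint k hk) (integrable_const (1:ℝ))
      (Filter.Eventually.of_forall fun ω => (hbdd k hk ω).2)
    rw [condExp_const (ℱ.le _)] at h1
    filter_upwards [h0, h1] with ω a b using ⟨a, b⟩
  -- adaptedness
  have hgadp : ∀ n, StronglyMeasurable[ℱ n] (g n) := by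
    intro n
    apply StronglyMeasurable.sub
    · exact (Finset.stronglyMeasurable_fun_sum _ fun k hk =>
        (stronglyMeasurable_condExp).mono
          (ℱ.mono (le_trans (Nat.sub_le k 1) (mem_Icc.1 hk).2))).const_mul _
    · exact (Finset.stronglyMeasurable_fun_sum _ fun k hk =>
        (hmeas k (mem_Icc.1 hk).1).mono (ℱ.mono (mem_Icc.1 hk).2)).const_mul _
  have hZadp : StronglyAdapted ℱ Z := fun n =>
    Real.continuous_exp.comp_stronglyMeasurable (hgadp n)
  -- integrability of Z
  have hZint : ∀ n, Integrable (Z n) μ := by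
    intro n
    refine Integrable.mono' (integrable_const (Real.exp ((1/2) * n)))
      ((hZadp n).mono (ℱ.le n)).aestronglyMeasurable ?_
    have hae : ∀ᵐ ω ∂μ, ∀ k ∈ Icc 1 n, ν k ω ≤ 1 := by
      rw [Filter.eventually_all_finset]
      intro k hk
      filter_upwards [hν01 k (mem_Icc.1 hk).1] with ω h using h.2
    filter_upwards [hae] with ω hω
    have hsum1 : ∑ k ∈ Icc 1 n, ν k ω ≤ n := by
      calc ∑ k ∈ Icc 1 n, ν k ω ≤ ∑ k ∈ Icc 1 n, (1:ℝ) := Finset.sum_le_sum hω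
      _ = (Icc 1 n).card := by simp
      _ ≤ n := by simp [Nat.card_Icc]
    have hsum0 : (0:ℝ) ≤ ∑ k ∈ Icc 1 n, M k ω :=
      Finset.sum_nonneg fun k hk => (hbdd k (mem_Icc.1 hk).1 ω).1
    rw [Real.norm_eq_abs, abs_of_nonneg (hZpos n ω)]
    apply Real.exp_le_exp.2
    have : (0:ℝ) ≤ Real.log 2 * ∑ k ∈ Icc 1 n, M k ω := mul_nonneg hln2pos hsum0
    simp only [hg]
    nlinarith
  -- supermartingale step
  have hstep : ∀ n, μ[Z (n+1) | ℱ n] ≤ᵐ[μ] Z n := by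
    intro n
    have hn1 : 1 ≤ n + 1 := Nat.succ_le_succ (Nat.zero_le n)
    set A : Ω → ℝ := fun ω => Z n ω * Real.exp ((1/2) * ν (n+1) ω) with hA
    set B : Ω → ℝ := fun ω => Real.exp (-(Real.log 2) * M (n+1) ω) with hB
    have hνmeas : StronglyMeasurable[ℱ n] (ν (n+1)) := stronglyMeasurable_condExp
    have hkey : ∀ x : ℝ, x ∈ Set.Icc (0:ℝ) 1 →
        Real.exp (-(Real.log 2) * x) ≤ 1 - (1/2) * x := by
      intro x hx
      have h := convexOn_exp.2 (Set.mem_univ (0:ℝ)) (Set.mem_univ (-(Real.log 2)))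
        (by linarith [hx.2] : (0:ℝ) ≤ 1 - x) hx.1 (by ring)
      simp only [smul_eq_mul, mul_zero, zero_add, Real.exp_zero, mul_one] at h
      rw [Real.exp_neg, Real.exp_log two_pos] at h
      have hxe : x * -Real.log 2 = -(Real.log 2) * x := by ring
      rw [hxe] at h
      linarith
    have hBbd : ∀ ω, ‖B ω‖ ≤ 1 := by
      intro ω
      rw [Real.norm_eq_abs, abs_of_nonneg (Real.exp_pos _).le]
      rw [Real.exp_le_one_iff]
      have := (hbdd (n+1) hn1 ω).1
      nlinarith
    have hBmeas : AEStronglyMeasurable B μ :=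
      (Real.continuous_exp.comp_stronglyMeasurable
        (((hmeas (n+1) hn1).mono (ℱ.le (n+1))).const_mul _)).aestronglyMeasurable
    have hBint : Integrable B μ :=
      Integrable.mono' (integrable_const 1) hBmeas (Filter.Eventually.of_forall hBbd)
    have hZsplit : Z (n+1) = A * B := by
      funext ω
      show Real.exp (g (n+1) ω) = A ω * B ω
      simp only [hA, hB, hZdef, hg]
      rw [← Real.exp_add, ← Real.exp_add]
      congr 1
      rw [Finset.sum_Icc_succ_top hn1, Finset.sum_Icc_succ_top hn1]
      ring
    have hABint : Integrable (A * B) μ := hZsplit ▸ hZint (n+1)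
    have hAmeas : StronglyMeasurable[ℱ n] A :=
      (hZadp n).mul (Real.continuous_exp.comp_stronglyMeasurable (hνmeas.const_mul _))
    have hpull : μ[A * B | ℱ n] =ᵐ[μ] A * μ[B | ℱ n] :=
      condExp_mul_of_stronglyMeasurable_left hAmeas hABint hBint
    have hMint1 : Integrable (fun ω => 1 - (1/2) * M (n+1) ω) μ := by
      have := ((hMint (n+1) hn1).const_mul (1/2:ℝ))
      exact (integrable_const (1:ℝ)).sub this
    have hmono1 : μ[B | ℱ n] ≤ᵐ[μ] μ[fun ω => 1 - (1/2) * M (n+1) ω | ℱ n] :=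
      condExp_mono hBint hMint1
        (Filter.Eventually.of_forall fun ω => hkey _ (hbdd (n+1) hn1 ω))
    have hconst : μ[(fun ω => 1 - (1/2) * M (n+1) ω : Ω → ℝ) | ℱ n]
        =ᵐ[μ] fun ω => 1 - (1/2) * ν (n+1) ω := by
      have heqf : (fun ω => 1 - (1/2) * M (n+1) ω : Ω → ℝ)
          = (fun _ => (1:ℝ)) - (1/2:ℝ) • (M (n+1)) := by
        funext ω; simp [smul_eq_mul]
      rw [heqf]
      refine (condExp_sub (integrable_const _) ((hMint (n+1) hn1).smul (1/2:ℝ)) (ℱ n)).trans ?_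
      rw [condExp_const (ℱ.le n)]
      filter_upwards [condExp_smul (m := ℱ n) (μ := μ) ((1:ℝ)/2) (M (n+1))] with ω hω
      simp only [Pi.sub_apply, hω, Pi.smul_apply, smul_eq_mul, hν]
      norm_num
    have hcongr : μ[Z (n+1) | ℱ n] =ᵐ[μ] A * μ[B | ℱ n] := by
      rw [hZsplit]; exact hpull
    filter_upwards [hcongr, hmono1, hconst] with ω h1 h2 h3
    rw [h1]
    have hcb : (μ[B | ℱ n]) ω ≤ 1 - (1/2) * ν (n+1) ω := by
      rw [← h3]; exact h2
    have hA0 : 0 ≤ A ω := mul_nonneg (hZpos n ω) (Real.exp_pos _).le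
    have hexp : 1 - (1/2) * ν (n+1) ω ≤ Real.exp (-((1/2) * ν (n+1) ω)) := by
      have := Real.add_one_le_exp (-((1/2) * ν (n+1) ω)); linarith
    calc (A * μ[B | ℱ n]) ω = A ω * (μ[B | ℱ n]) ω := rfl
    _ ≤ A ω * Real.exp (-((1/2) * ν (n+1) ω)) :=
        mul_le_mul_of_nonneg_left (le_trans hcb hexp) hA0
    _ = Z n ω := by
        simp only [hA]
        rw [mul_assoc, ← Real.exp_add]
        norm_num
  have hZsuper : Supermartingale Z ℱ μ := supermartingale_nat hZadp hZint hstep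
  -- event inclusion
  have hsub : {ω | ∃ n : ℕ, 1 ≤ n ∧
        4 * c * ι ≤ ∑ k ∈ Finset.Icc 1 n, ν k ω ∧
        ∑ k ∈ Finset.Icc 1 n, M k ω ≤ c * ι} ⊆ {ω | ∃ n, 2/p ≤ Z n ω} := by
    intro ω ⟨n, hn, h4, hM⟩
    refine ⟨n, ?_⟩
    have hgb : ι ≤ g n ω := by
      simp only [hg]
      nlinarith [mul_le_mul_of_nonneg_left hM hln2pos, mul_le_mul_of_nonneg_right hc hιpos.le]
    calc (2:ℝ)/p = Real.exp ι := (Real.exp_log (by positivity)).symm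
    _ ≤ Z n ω := Real.exp_le_exp.2 hgb
  refine le_trans (le_trans (measure_mono hsub)
    (supermart_maximal hZsuper hZpos (by positivity : (0:ℝ) < 2/p))) ?_
  have hZ0 : ∫ ω, Z 0 ω ∂μ = 1 := by
    simp [hZdef, hg]
  rw [hZ0]
  apply ENNReal.ofReal_le_ofReal
  rw [one_div, inv_div]
  linarith
end

section
/- Let (F_k)_{k≥0} be a filtration on a probability space and let M_1, M_2, … be random variables taking values in [0,1] such that M_k is F_k-measurable for every k ≥ 1. Define μ_k := E[M_k | F_{k−1}]. Then for every fixed λ < 0, the process Y_n := exp( λ Σ_{k=1}^n M_k − (e^λ − 1) Σ_{k=1}^n μ_k ), with Y_0 := 1, is a supermartingale with respect to (F_n)_{n≥0}. -/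
open MeasureTheory Finset

/-- convexity bound: for `x ∈ [0,1]`, `exp (l x) ≤ 1 + (exp l - 1) x`. -/
lemma exp_mul_le_aux (l : ℝ) {x : ℝ} (hx : x ∈ Set.Icc (0 : ℝ) 1) :
    Real.exp (l * x) ≤ 1 + (Real.exp l - 1) * x := by
  obtain ⟨hx0, hx1⟩ := hx
  have h := convexOn_exp.2 (Set.mem_univ (0 : ℝ)) (Set.mem_univ l)
    (by linarith : (0:ℝ) ≤ 1 - x) hx0 (by ring)
  simp only [smul_eq_mul, mul_zero, zero_add, Real.exp_zero] at h
  calc Real.exp (l * x) = Real.exp (x * l) := by ring_nf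
    _ ≤ (1 - x) * 1 + x * Real.exp l := h
    _ = 1 + (Real.exp l - 1) * x := by ring

/-- With `(ℱ k)` a filtration, `M k` `[0,1]`-valued and `ℱ k`-measurable for
`k ≥ 1`, and `μ_k := E[M k | ℱ (k-1)]`, for every fixed `λ < 0` the process
`Y n := exp (λ ∑_{k=1}^n M k − (e^λ − 1) ∑_{k=1}^n μ_k)` (with `Y 0 = 1`) is a
supermartingale with respect to `(ℱ n)`. -/
theorem stmt1 {Ω : Type*} {m0 : MeasurableSpace Ω} {μ : Measure Ω} [IsProbabilityMeasure μ]
    (ℱ : Filtration ℕ m0) (M : ℕ → Ω → ℝ)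
    (hmeas : ∀ k, 1 ≤ k → StronglyMeasurable[ℱ k] (M k))
    (hbdd : ∀ k, 1 ≤ k → ∀ ω, M k ω ∈ Set.Icc (0 : ℝ) 1)
    (l : ℝ) (hl : l < 0) :
    Supermartingale
      (fun n ω => Real.exp (l * ∑ k ∈ Finset.Icc 1 n, M k ω
        - (Real.exp l - 1) * ∑ k ∈ Finset.Icc 1 n, (μ[M k | ℱ (k - 1)]) ω))
      ℱ μ := by
  set c : ℝ := Real.exp l - 1 with hc
  have hc0 : c < 0 := by
    have : Real.exp l < 1 := Real.exp_lt_one_iff.2 hl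
    simp [hc]; linarith
  -- integrability of M k
  have hMint : ∀ k, 1 ≤ k → Integrable (M k) μ := by
    intro k hk
    refine Integrable.mono' (integrable_const (1:ℝ))
      ((hmeas k hk).mono (ℱ.le k)).aestronglyMeasurable ?_
    filter_upwards with ω
    have := hbdd k hk ω
    rw [Real.norm_eq_abs, abs_le]
    constructor <;> [linarith [this.1]; exact this.2]
  -- a.e. bounds on the conditional expectations
  have hμ01 : ∀ k, 1 ≤ k → ∀ᵐ ω ∂μ, (μ[M k | ℱ (k-1)]) ω ∈ Set.Icc (0:ℝ) 1 := by
    intro k hk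
    have h0 : 0 ≤ᵐ[μ] μ[M k | ℱ (k-1)] :=
      condExp_nonneg (Filter.Eventually.of_forall fun ω => (hbdd k hk ω).1)
    have h1 : μ[M k | ℱ (k-1)] ≤ᵐ[μ] μ[(fun _ => (1:ℝ)) | ℱ (k-1)] :=
      condExp_mono (hMint k hk) (integrable_const 1)
        (Filter.Eventually.of_forall fun ω => (hbdd k hk ω).2)
    filter_upwards [h0, h1] with ω h0 h1
    have h2 := congrFun (condExp_const (μ := μ) (ℱ.le (k-1)) (1:ℝ)) ω
    exact ⟨h0, by rw [h2] at h1; exact h1⟩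
  -- adaptedness
  have hadp : ∀ n, StronglyMeasurable[ℱ n] (fun ω => Real.exp (l * ∑ k ∈ Finset.Icc 1 n, M k ω
      - c * ∑ k ∈ Finset.Icc 1 n, (μ[M k | ℱ (k - 1)]) ω)) := by
    intro n
    refine Real.continuous_exp.comp_stronglyMeasurable (StronglyMeasurable.sub ?_ ?_)
    · refine (Finset.stronglyMeasurable_fun_sum _ fun k hk => ?_).const_mul l
      rw [Finset.mem_Icc] at hk
      exact (hmeas k hk.1).mono (ℱ.mono hk.2)
    · refine (Finset.stronglyMeasurable_fun_sum _ fun k hk => ?_).const_mul c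
      rw [Finset.mem_Icc] at hk
      exact stronglyMeasurable_condExp.mono (ℱ.mono ((Nat.sub_le k 1).trans hk.2))
  -- a.e. bounds on the sums
  have hsums : ∀ n, ∀ᵐ ω ∂μ, ∀ k ∈ Finset.Icc 1 n, (μ[M k | ℱ (k-1)]) ω ∈ Set.Icc (0:ℝ) 1 := by
    intro n
    rw [Filter.eventually_all_finset]
    intro k hk
    rw [Finset.mem_Icc] at hk
    exact hμ01 k hk.1
  -- integrability of Y n
  have hYint : ∀ n, Integrable (fun ω => Real.exp (l * ∑ k ∈ Finset.Icc 1 n, M k ω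
      - c * ∑ k ∈ Finset.Icc 1 n, (μ[M k | ℱ (k - 1)]) ω)) μ := by
    intro n
    refine Integrable.mono' (integrable_const (Real.exp (-c * n)))
      ((hadp n).mono (ℱ.le n)).aestronglyMeasurable ?_
    filter_upwards [hsums n] with ω hω
    rw [Real.norm_eq_abs, Real.abs_exp, Real.exp_le_exp]
    have hS : 0 ≤ ∑ k ∈ Finset.Icc 1 n, M k ω := by
      refine Finset.sum_nonneg fun k hk => ?_
      rw [Finset.mem_Icc] at hk
      exact (hbdd k hk.1 ω).1
    have hT : ∑ k ∈ Finset.Icc 1 n, (μ[M k | ℱ (k-1)]) ω ≤ n := by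
      calc ∑ k ∈ Finset.Icc 1 n, (μ[M k | ℱ (k-1)]) ω
          ≤ ∑ k ∈ Finset.Icc 1 n, (1:ℝ) := Finset.sum_le_sum fun k hk => (hω k hk).2
        _ = (n : ℝ) := by simp [Nat.card_Icc]
    nlinarith
  refine supermartingale_nat (fun n => hadp n) hYint ?_
  intro n
  -- decompose Y (n+1) = g * X
  set g : Ω → ℝ := fun ω => Real.exp (l * ∑ k ∈ Finset.Icc 1 n, M k ω
    - c * ∑ k ∈ Finset.Icc 1 (n+1), (μ[M k | ℱ (k - 1)]) ω) with hg
  set X : Ω → ℝ := fun ω => Real.exp (l * M (n+1) ω) with hX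
  have hsum_succ : ∀ (f : ℕ → ℝ), ∑ k ∈ Finset.Icc 1 (n+1), f k
      = (∑ k ∈ Finset.Icc 1 n, f k) + f (n+1) := by
    intro f
    exact Finset.sum_Icc_succ_top (Nat.one_le_iff_ne_zero.2 (Nat.succ_ne_zero n)) f
  have hYeq : (fun ω => Real.exp (l * ∑ k ∈ Finset.Icc 1 (n+1), M k ω
      - c * ∑ k ∈ Finset.Icc 1 (n+1), (μ[M k | ℱ (k - 1)]) ω)) = g * X := by
    funext ω
    simp only [hg, hX, Pi.mul_apply, ← Real.exp_add]
    rw [hsum_succ (fun k => M k ω)]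
    ring_nf
  -- g is ℱ n strongly measurable
  have hgmeas : StronglyMeasurable[ℱ n] g := by
    refine Real.continuous_exp.comp_stronglyMeasurable (StronglyMeasurable.sub ?_ ?_)
    · refine (Finset.stronglyMeasurable_fun_sum _ fun k hk => ?_).const_mul l
      rw [Finset.mem_Icc] at hk
      exact (hmeas k hk.1).mono (ℱ.mono hk.2)
    · refine (Finset.stronglyMeasurable_fun_sum _ fun k hk => ?_).const_mul c
      rw [Finset.mem_Icc] at hk
      exact stronglyMeasurable_condExp.mono (ℱ.mono (by omega))
  have hXint : Integrable X μ := by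
    refine Integrable.mono' (integrable_const (1:ℝ))
      (Real.continuous_exp.comp_stronglyMeasurable
        (((hmeas (n+1) (Nat.le_add_left 1 n)).mono (ℱ.le (n+1))).const_mul l)).aestronglyMeasurable ?_
    filter_upwards with ω
    rw [Real.norm_eq_abs, Real.abs_exp]
    have h1 := (hbdd (n+1) (Nat.le_add_left 1 n) ω).1
    calc Real.exp (l * M (n+1) ω) ≤ Real.exp 0 := by
          rw [Real.exp_le_exp]; nlinarith
      _ = 1 := Real.exp_zero
  have hgXint : Integrable (g * X) μ := by rw [← hYeq]; exact hYint (n+1)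
  have hpull : μ[g * X | ℱ n] =ᵐ[μ] g * μ[X | ℱ n] :=
    condExp_mul_of_stronglyMeasurable_left hgmeas hgXint hXint
  -- bound on condexp of X
  have haux : Integrable (fun ω => 1 + c * M (n+1) ω) μ := by
    refine (integrable_const (1:ℝ)).add (((hMint (n+1) (Nat.le_add_left 1 n)).const_mul c))
  have hXbound : μ[X | ℱ n] ≤ᵐ[μ] μ[(fun ω => 1 + c * M (n+1) ω) | ℱ n] :=
    condExp_mono hXint haux (Filter.Eventually.of_forall fun ω =>
      exp_mul_le_aux l (hbdd (n+1) (Nat.le_add_left 1 n) ω))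
  have hcond_eq : μ[(fun ω => 1 + c * M (n+1) ω) | ℱ n]
      =ᵐ[μ] fun ω => 1 + c * (μ[M (n+1) | ℱ n]) ω := by
    have h1 : μ[(fun ω => 1 + c * M (n+1) ω) | ℱ n]
        =ᵐ[μ] μ[(fun _ => (1:ℝ)) | ℱ n] + μ[(fun ω => c * M (n+1) ω) | ℱ n] :=
      condExp_add (integrable_const 1) ((hMint (n+1) (Nat.le_add_left 1 n)).const_mul c) _
    have h2 : μ[(fun ω => c * M (n+1) ω) | ℱ n] =ᵐ[μ] c • μ[M (n+1) | ℱ n] := by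
      exact condExp_smul (μ := μ) c (M (n+1)) (ℱ n)
    filter_upwards [h1, h2] with ω e1 e2
    have e3 := congrFun (condExp_const (μ := μ) (ℱ.le n) (1:ℝ)) ω
    simp only [Pi.add_apply, Pi.smul_apply, smul_eq_mul] at e1 e2 ⊢
    rw [e1, e2, e3]
  -- combine
  rw [show (fun ω => Real.exp (l * ∑ k ∈ Finset.Icc 1 (n+1), M k ω
      - c * ∑ k ∈ Finset.Icc 1 (n+1), (μ[M k | ℱ (k - 1)]) ω)) = g * X from hYeq]
  filter_upwards [hpull, hXbound, hcond_eq] with ω h1 h2 h3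
  have hn1 : (n + 1) - 1 = n := Nat.succ_sub_one n
  rw [h1]
  simp only [Pi.mul_apply]
  have key : (μ[X | ℱ n]) ω ≤ Real.exp (c * (μ[M (n+1) | ℱ n]) ω) := by
    rw [h3] at h2
    calc (μ[X | ℱ n]) ω ≤ 1 + c * (μ[M (n+1) | ℱ n]) ω := h2
      _ ≤ Real.exp (c * (μ[M (n+1) | ℱ n]) ω) := by
          linarith [Real.add_one_le_exp (c * (μ[M (n+1) | ℱ n]) ω)]
  calc g ω * (μ[X | ℱ n]) ω ≤ g ω * Real.exp (c * (μ[M (n+1) | ℱ n]) ω) :=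
        mul_le_mul_of_nonneg_left key (Real.exp_pos _).le
    _ = Real.exp (l * ∑ k ∈ Finset.Icc 1 n, M k ω
        - c * ∑ k ∈ Finset.Icc 1 n, (μ[M k | ℱ (k - 1)]) ω) := by
        rw [hg, ← Real.exp_add, hsum_succ (fun k => (μ[M k | ℱ (k-1)]) ω)]
        simp only [hn1]
        ring_nf
end

section
/- (Freedman's inequality.) Let (M_n)_{n≥0} be a martingale with M_0 = 0 and |M_n − M_{n−1}| ≤ c for all n ≥ 1, with respect to the filtration F_k = σ(M_0, M_1, …, M_k). Let Var_n := Σ_{k=1}^n E[(M_k − M_{k−1})² | F_{k−1}]. Then for any positive x and any positive y, P[ ∃ n : M_n ≥ x and Var_n ≤ y ] ≤ exp( −x² / (2(y + cx)) ). -/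
open MeasureTheory Finset

open Real in
lemma exp_aux {u a : ℝ} (h : |u| ≤ a) (ha : a < 1) :
    Real.exp u ≤ 1 + u + u ^ 2 / (2 * (1 - a)) := by
  have ha0 : 0 ≤ a := le_trans (abs_nonneg u) h
  have h1 : |u| ≤ 1 := h.trans ha.le
  have hb := Real.exp_bound h1 (by norm_num : (0:ℕ) < 3)
  simp only [Finset.sum_range_succ, Finset.sum_range_zero] at hb
  norm_num [Nat.factorial] at hb
  have h3 : |u| ^ 3 ≤ a * u ^ 2 := by
    have h4 : |u| ^ 3 = |u| * u ^ 2 := by rw [← sq_abs]; ring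
    rw [h4]; nlinarith [sq_nonneg u, sq_abs u]
  have habs := abs_le.1 hb
  have hpos : 0 < 1 - a := by linarith
  have key : rexp u ≤ 1 + u + u ^ 2 / 2 + (2/9) * (a * u ^ 2) := by nlinarith [habs.2]
  refine key.trans ?_
  have h5 : u ^ 2 / 2 + (2/9) * (a * u ^ 2) ≤ u ^ 2 / (2 * (1 - a)) := by
    rw [div_add' _ _ _ (two_ne_zero), div_le_div_iff₀ (by norm_num) (by linarith)]
    nlinarith [sq_nonneg u, mul_nonneg ha0 (sq_nonneg u),
      mul_nonneg (mul_nonneg ha0 ha0) (sq_nonneg u)]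
  linarith

/-- **Freedman's inequality.** Let `(M n)` be a martingale with `M 0 = 0` and
`|M n − M (n−1)| ≤ c`, with respect to its natural filtration `ℱ k = σ(M 0, …, M k)`, and let
`Var n := ∑_{k=1}^n E[(M k − M (k−1))² | ℱ (k−1)]`.  Then for any positive `x, y`,
`P[∃ n, M n ≥ x ∧ Var n ≤ y] ≤ exp (−x² / (2 (y + c x)))`. -/
theorem stmt2 {Ω : Type*} {m0 : MeasurableSpace Ω} {μ : Measure Ω} [IsProbabilityMeasure μ]
    (M : ℕ → Ω → ℝ) (hMmeas : ∀ n, StronglyMeasurable (M n))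
    (hmart : Martingale M (Filtration.natural M hMmeas) μ)
    (hM0 : ∀ ω, M 0 ω = 0)
    (c : ℝ) (hc : 0 < c)
    (hbdd : ∀ n, 1 ≤ n → ∀ ω, |M n ω - M (n - 1) ω| ≤ c)
    (x y : ℝ) (hx : 0 < x) (hy : 0 < y) :
    μ {ω | ∃ n : ℕ, x ≤ M n ω ∧
        (∑ k ∈ Finset.Icc 1 n,
          (μ[fun ω' => (M k ω' - M (k - 1) ω') ^ 2 | Filtration.natural M hMmeas (k - 1)]) ω) ≤ y}
      ≤ ENNReal.ofReal (Real.exp (-(x ^ 2) / (2 * (y + c * x)))) := by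
  set ℱ := Filtration.natural M hMmeas with hℱ
  set V : ℕ → Ω → ℝ := fun k => μ[fun ω' => (M k ω' - M (k - 1) ω') ^ 2 | ℱ (k - 1)] with hV
  set Var : ℕ → Ω → ℝ := fun n ω => ∑ k ∈ Finset.Icc 1 n, V k ω with hVar
  have hYX : (0:ℝ) < y + c * x := by positivity
  set l : ℝ := x / (y + c * x) with hl
  have hl0 : 0 < l := by positivity
  set a : ℝ := c * l with ha
  have ha0 : 0 < a := by positivity
  have ha1 : a < 1 := by
    rw [ha, hl, mul_div_assoc']
    rw [div_lt_one hYX]; linarith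
  have h1a : 1 - a = y / (y + c * x) := by
    rw [ha, hl]; field_simp; ring
  set h2 : ℝ := l ^ 2 / (2 * (1 - a)) with hh2
  have h2_0 : 0 < h2 := by
    rw [hh2]; have : 0 < 1 - a := by linarith
    positivity
  set Z : ℕ → Ω → ℝ := fun n ω => Real.exp (l * M n ω - h2 * Var n ω) with hZ
  -- measurability
  have hMadp : ∀ n, StronglyMeasurable[ℱ n] (M n) := fun n => hmart.stronglyAdapted n
  have hVmeas : ∀ k, StronglyMeasurable[ℱ (k - 1)] (V k) := fun k => stronglyMeasurable_condExp
  have hVarmeas : ∀ n, StronglyMeasurable[ℱ n] (Var n) := by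
    intro n
    apply Finset.stronglyMeasurable_fun_sum
    intro k hk
    exact (hVmeas k).mono (ℱ.mono (by simp only [Finset.mem_Icc] at hk; omega))
  have hZmeas : ∀ n, StronglyMeasurable[ℱ n] (Z n) :=
    fun n => Real.continuous_exp.comp_stronglyMeasurable
      ((stronglyMeasurable_const.mul (hMadp n)).sub
        (stronglyMeasurable_const.mul (hVarmeas n)))
  have hZadp : StronglyAdapted ℱ Z := fun n => hZmeas n
  -- boundedness of increments
  have hd : ∀ n ω, |M (n + 1) ω - M n ω| ≤ c := by
    intro n ω
    have := hbdd (n + 1) (by omega) ω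
    simpa using this
  have hMbd : ∀ n ω, |M n ω| ≤ n * c := by
    intro n
    induction n with
    | zero => intro ω; simp [hM0 ω]
    | succ n ih =>
      intro ω
      have h1 := hd n ω
      have h2 := ih ω
      push_cast
      calc |M (n+1) ω| = |(M (n+1) ω - M n ω) + M n ω| := by ring_nf
        _ ≤ |M (n+1) ω - M n ω| + |M n ω| := abs_add_le _ _
        _ ≤ c + n * c := by linarith
        _ = (n + 1) * c := by ring
  -- integrability helpers
  have hdint : ∀ n, Integrable (fun ω => M (n + 1) ω - M n ω) μ :=
    fun n => (hmart.integrable (n + 1)).sub (hmart.integrable n)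
  have hdsqint : ∀ n, Integrable (fun ω => (M (n + 1) ω - M n ω) ^ 2) μ := by
    intro n
    refine Integrable.mono' (integrable_const (c ^ 2))
      (((hMmeas (n+1)).sub (hMmeas n)).pow 2).aestronglyMeasurable ?_
    refine Filter.Eventually.of_forall fun ω => ?_
    have := hd n ω
    rw [Real.norm_eq_abs, abs_pow, ← sq_abs c, abs_of_pos hc]
    exact pow_le_pow_left₀ (abs_nonneg _) this 2
  -- V bounds a.e.
  have hVbd : ∀ᵐ ω ∂μ, ∀ k, 0 ≤ V k ω ∧ V k ω ≤ c ^ 2 := by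
    rw [MeasureTheory.ae_all_iff]
    intro k
    have hnn : 0 ≤ᵐ[μ] V k :=
      condExp_nonneg (Filter.Eventually.of_forall fun ω => sq_nonneg _)
    have hub : V k ≤ᵐ[μ] fun _ => c ^ 2 := by
      have hint : Integrable (fun ω' => (M k ω' - M (k - 1) ω') ^ 2) μ := by
        rcases Nat.eq_zero_or_pos k with hk | hk
        · subst hk; simp
        · obtain ⟨m, rfl⟩ := Nat.exists_eq_add_of_le' hk
          simpa using hdsqint m
      have := condExp_mono (m := ℱ (k-1)) hint (integrable_const (c ^ 2))
        (Filter.Eventually.of_forall fun ω => ?_)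
      · refine this.trans ?_
        rw [condExp_const (ℱ.le _)]
      · rcases Nat.eq_zero_or_pos k with hk | hk
        · subst hk; simp; positivity
        · show (M k ω - M (k-1) ω) ^ 2 ≤ c ^ 2
          rw [← sq_abs (M k ω - M (k-1) ω), ← sq_abs c, abs_of_pos hc]
          exact pow_le_pow_left₀ (abs_nonneg _) (hbdd k hk ω) 2
    filter_upwards [hnn, hub] with ω h1 h2 using ⟨h1, h2⟩
  -- Var bounds a.e.
  have hVarbd : ∀ᵐ ω ∂μ, ∀ n, 0 ≤ Var n ω ∧ Var n ω ≤ n * c ^ 2 := by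
    filter_upwards [hVbd] with ω hω
    intro n
    refine ⟨Finset.sum_nonneg fun k _ => (hω k).1, ?_⟩
    calc Var n ω ≤ ∑ k ∈ Finset.Icc 1 n, c ^ 2 :=
          Finset.sum_le_sum fun k _ => (hω k).2
      _ = n * c ^ 2 := by
          rw [Finset.sum_const, Nat.card_Icc]
          simp [nsmul_eq_mul]
  -- Z integrable
  have hZint : ∀ n, Integrable (Z n) μ := by
    intro n
    refine Integrable.mono' (integrable_const (Real.exp (l * (n * c))))
      ((hZmeas n).mono (ℱ.le n)).aestronglyMeasurable ?_
    filter_upwards [hVarbd] with ω hω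
    rw [Real.norm_eq_abs, abs_of_pos (Real.exp_pos _), Real.exp_le_exp]
    have h1 := (abs_le.1 (hMbd n ω)).2
    have h3 := (hω n).1
    nlinarith [mul_nonneg h2_0.le h3, mul_le_mul_of_nonneg_left h1 hl0.le]
  -- one-step supermartingale inequality
  have hstep : ∀ n, μ[Z (n+1) | ℱ n] ≤ᵐ[μ] Z n := by
    intro n
    set d : Ω → ℝ := fun ω => M (n+1) ω - M n ω with hdd
    set e : Ω → ℝ := fun ω => Real.exp (l * d ω) with he
    set W : Ω → ℝ := fun ω => Real.exp (l * M n ω - h2 * Var (n+1) ω) with hWdef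
    have hWmeas : StronglyMeasurable[ℱ n] W := by
      apply Real.continuous_exp.comp_stronglyMeasurable
      refine (stronglyMeasurable_const.mul (hMadp n)).sub
        (stronglyMeasurable_const.mul ?_)
      apply Finset.stronglyMeasurable_fun_sum
      intro k hk
      exact (hVmeas k).mono (ℱ.mono (by simp only [Finset.mem_Icc] at hk; omega))
    have hZeq : Z (n+1) = W * e := by
      funext ω
      simp only [hZ, hWdef, he, Pi.mul_apply, hdd]
      rw [← Real.exp_add]; ring_nf
    have heint : Integrable e μ := by
      refine Integrable.mono' (integrable_const (Real.exp (l * c)))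
        (Real.continuous_exp.comp_aestronglyMeasurable
          (((hMmeas (n+1)).sub (hMmeas n)).const_mul l).aestronglyMeasurable) ?_
      refine Filter.Eventually.of_forall fun ω => ?_
      rw [Real.norm_eq_abs, abs_of_pos (Real.exp_pos _), Real.exp_le_exp]
      have := (abs_le.1 (hd n ω)).2
      have : l * d ω ≤ l * c := by
        have h4 := (abs_le.1 (hd n ω)).2
        exact mul_le_mul_of_nonneg_left h4 hl0.le
      linarith
    have hWeint : Integrable (W * e) μ := hZeq ▸ hZint (n+1)
    have hpull : μ[W * e | ℱ n] =ᵐ[μ] W * μ[e | ℱ n] :=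
      condExp_mul_of_stronglyMeasurable_left hWmeas hWeint heint
    -- pointwise bound on e
    have hgpt : ∀ ω, e ω ≤ 1 + l * d ω + h2 * d ω ^ 2 := by
      intro ω
      have habs : |l * d ω| ≤ a := by
        rw [abs_mul, abs_of_pos hl0, ha]
        calc l * |d ω| ≤ l * c := mul_le_mul_of_nonneg_left (hd n ω) hl0.le
          _ = c * l := mul_comm _ _
      have := exp_aux habs ha1
      have heq : (l * d ω) ^ 2 / (2 * (1 - a)) = h2 * d ω ^ 2 := by
        rw [hh2]; ring
      rw [heq] at this
      exact this
    have hgint : Integrable (fun ω => 1 + l * d ω + h2 * d ω ^ 2) μ :=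
      ((integrable_const (1:ℝ)).add ((hdint n).const_mul l)).add
        ((hdsqint n).const_mul h2)
    have hemono : μ[e | ℱ n] ≤ᵐ[μ] μ[fun ω => 1 + l * d ω + h2 * d ω ^ 2 | ℱ n] :=
      condExp_mono heint hgint (Filter.Eventually.of_forall hgpt)
    -- compute condexp of the bound
    have hcd : μ[d | ℱ n] =ᵐ[μ] 0 := by
      have h5 : μ[d | ℱ n] =ᵐ[μ] μ[M (n+1) | ℱ n] - μ[M n | ℱ n] :=
        condExp_sub (hmart.integrable (n+1)) (hmart.integrable n) _
      have h6 : μ[M (n+1) | ℱ n] =ᵐ[μ] M n := hmart.condExp_ae_eq (Nat.le_succ n)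
      have h7 : μ[M n | ℱ n] = M n :=
        condExp_of_stronglyMeasurable (ℱ.le n) (hMadp n) (hmart.integrable n)
      rw [h7] at h5
      filter_upwards [h5, h6] with ω hω1 hω2
      simp only [Pi.sub_apply, Pi.zero_apply] at *
      rw [hω1, hω2]; ring
    have hsplit : μ[fun ω => 1 + l * d ω + h2 * d ω ^ 2 | ℱ n]
        =ᵐ[μ] fun ω => 1 + h2 * V (n+1) ω := by
      have e1 : μ[fun ω => 1 + l * d ω + h2 * d ω ^ 2 | ℱ n]
          =ᵐ[μ] μ[fun ω => 1 + l * d ω | ℱ n] + μ[fun ω => h2 * d ω ^ 2 | ℱ n] :=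
        condExp_add ((integrable_const (1:ℝ)).add ((hdint n).const_mul l))
          ((hdsqint n).const_mul h2) _
      have e2 : μ[fun ω => 1 + l * d ω | ℱ n]
          =ᵐ[μ] μ[fun _ => (1:ℝ) | ℱ n] + μ[fun ω => l * d ω | ℱ n] :=
        condExp_add (integrable_const (1:ℝ)) ((hdint n).const_mul l) _
      have e3 : μ[fun _ => (1:ℝ) | ℱ n] = fun _ => (1:ℝ) := condExp_const (ℱ.le n) 1
      have e4 : μ[fun ω => l * d ω | ℱ n] =ᵐ[μ] l • μ[d | ℱ n] := condExp_smul l d _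
      have e5 : μ[fun ω => h2 * d ω ^ 2 | ℱ n]
          =ᵐ[μ] h2 • μ[fun ω => d ω ^ 2 | ℱ n] := condExp_smul h2 (fun ω => d ω ^ 2) _
      have e6 : μ[fun ω => d ω ^ 2 | ℱ n] = V (n+1) := rfl
      rw [e6] at e5
      filter_upwards [e1, e2, e4, e5, hcd] with ω h1 h5 h6 h7 h8
      simp only [Pi.add_apply, Pi.smul_apply, smul_eq_mul] at *
      rw [h1, h5, h6, h7, e3, h8]
      simp
    -- combine
    have hVarsucc : ∀ ω, Var (n+1) ω = Var n ω + V (n+1) ω := by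
      intro ω
      exact Finset.sum_Icc_succ_top (by omega) _
    calc μ[Z (n+1) | ℱ n] =ᵐ[μ] W * μ[e | ℱ n] := hZeq ▸ hpull
      _ ≤ᵐ[μ] Z n := by
        filter_upwards [hemono, hsplit] with ω h1 h5
        have hWpos : 0 < W ω := Real.exp_pos _
        have h6 : (μ[e | ℱ n]) ω ≤ 1 + h2 * V (n+1) ω := by
          rw [← h5]; exact h1
        have h7 : 1 + h2 * V (n+1) ω ≤ Real.exp (h2 * V (n+1) ω) := by
          have := Real.add_one_le_exp (h2 * V (n+1) ω); linarith
        calc (W * μ[e | ℱ n]) ω = W ω * (μ[e | ℱ n]) ω := rfl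
          _ ≤ W ω * Real.exp (h2 * V (n+1) ω) := by
              exact mul_le_mul_of_nonneg_left (h6.trans h7) hWpos.le
          _ = Z n ω := by
              rw [hWdef, hZ]
              simp only
              rw [← Real.exp_add, hVarsucc ω]
              ring_nf
  have hsuper : Supermartingale Z ℱ μ := supermartingale_nat hZadp hZint hstep
  -- the threshold
  set t : ℝ := x ^ 2 / (2 * (y + c * x)) with ht
  have hlx : l * x - h2 * y = t := by
    rw [hh2, h1a, hl, ht]
    field_simp
    ring
  set ε : ℝ := Real.exp t with hε
  have hεpos : 0 < ε := Real.exp_pos _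
  -- Z 0 = 1
  have hZ0 : Z 0 = fun _ => (1:ℝ) := by
    funext ω
    simp [hZ, hVar, hM0 ω]
  have hintZ0 : (∫ ω, Z 0 ω ∂μ) = 1 := by
    rw [hZ0]; simp
  -- the approximating events
  set A : ℕ → Set Ω := fun n => {ω | ∃ k ≤ n, x ≤ M k ω ∧ Var k ω ≤ y} with hA
  have hAmono : Monotone A := by
    intro m n hmn ω hω
    obtain ⟨k, hk, h1, h5⟩ := hω
    exact ⟨k, hk.trans hmn, h1, h5⟩
  have hAbd : ∀ n, μ (A n) ≤ ENNReal.ofReal (Real.exp (-t)) := by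
    intro n
    set τ : Ω → ℕ := hittingBtwn Z (Set.Ici ε) 0 n with hτdef
    have hτ : IsStoppingTime ℱ (fun ω => (τ ω : ℕ∞)) :=
      hZadp.adapted.isStoppingTime_hittingBtwn measurableSet_Ici
    have hτle : ∀ ω, τ ω ≤ n := fun ω => hittingBtwn_le ω
    set sv : Ω → ℝ := stoppedValue Z (fun ω => (τ ω : ℕ∞)) with hsv
    have hsvneg_int : Integrable (stoppedValue (-Z) (fun ω => (τ ω : ℕ∞))) μ :=
      (hsuper.neg).integrable_stoppedValue hτ (fun ω => WithTop.coe_le_coe.2 (hτle ω))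
    have hsvint : Integrable sv μ := by
      have := hsvneg_int.neg
      refine this.congr (Filter.Eventually.of_forall fun ω => ?_)
      simp [hsv, stoppedValue]
    have hexp : (∫ ω, sv ω ∂μ) ≤ 1 := by
      have hmono := (hsuper.neg).expected_stoppedValue_mono
        (isStoppingTime_const ℱ 0) hτ (fun ω => WithTop.coe_le_coe.2 (Nat.zero_le _))
        (fun ω => WithTop.coe_le_coe.2 (hτle ω))
      have h8 : stoppedValue (-Z) (fun _ => WithTop.some (0:ℕ)) = -(Z 0) := by
        funext ω; simp [stoppedValue]
      have h9 : stoppedValue (-Z) (fun ω => (τ ω : ℕ∞)) = -sv := by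
        funext ω; simp [hsv, stoppedValue]
      rw [h8, h9] at hmono
      simp only [Pi.neg_apply] at hmono
      rw [integral_neg, integral_neg, neg_le_neg_iff, hintZ0] at hmono
      exact hmono
    have hsub : A n ⊆ {ω | ε ≤ sv ω} := by
      intro ω hω
      obtain ⟨k, hk, h1, h5⟩ := hω
      have hZk : ε ≤ Z k ω := by
        rw [hε, hZ]
        simp only
        rw [Real.exp_le_exp, ← hlx]
        have := mul_le_mul_of_nonneg_left h1 hl0.le
        have := mul_le_mul_of_nonneg_left h5 h2_0.le
        linarith
      have : sv ω ∈ Set.Ici ε := by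
        refine stoppedValue_hittingBtwn_mem ?_
        exact ⟨k, ⟨Nat.zero_le _, hk⟩, hZk⟩
      exact this
    have hsvnn : 0 ≤ᵐ[μ] sv := by
      refine Filter.Eventually.of_forall fun ω => ?_
      simp only [hsv, stoppedValue]
      exact (Real.exp_pos _).le
    have hmark := mul_meas_ge_le_integral_of_nonneg hsvnn hsvint ε
    have hμS : μ {ω | ε ≤ sv ω} ≠ ⊤ := measure_ne_top _ _
    have hb0 : ENNReal.ofReal ε * μ {ω | ε ≤ sv ω} ≤ ENNReal.ofReal (∫ ω, sv ω ∂μ) := by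
      have hh := ENNReal.ofReal_le_ofReal hmark
      rwa [ENNReal.ofReal_mul hεpos.le, ofReal_measureReal hμS] at hh
    have hb1 : ENNReal.ofReal ε * μ (A n) ≤ 1 := by
      calc ENNReal.ofReal ε * μ (A n) ≤ ENNReal.ofReal ε * μ {ω | ε ≤ sv ω} :=
            mul_le_mul_right (measure_mono hsub) _
        _ ≤ ENNReal.ofReal (∫ ω, sv ω ∂μ) := hb0
        _ ≤ 1 := by
            rw [← ENNReal.ofReal_one]
            exact ENNReal.ofReal_le_ofReal hexp
    have hb2 : μ (A n) ≤ (ENNReal.ofReal ε)⁻¹ := by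
      rw [ENNReal.le_inv_iff_mul_le]
      rw [mul_comm]
      exact hb1
    calc μ (A n) ≤ (ENNReal.ofReal ε)⁻¹ := hb2
      _ = ENNReal.ofReal ε⁻¹ := (ENNReal.ofReal_inv_of_pos hεpos).symm
      _ = ENNReal.ofReal (Real.exp (-t)) := by rw [hε, ← Real.exp_neg]
  -- conclude
  have hsubT : {ω | ∃ n : ℕ, x ≤ M n ω ∧ Var n ω ≤ y} ⊆ ⋃ n, A n := by
    intro ω hω
    obtain ⟨n, h1, h5⟩ := hω
    exact Set.mem_iUnion.2 ⟨n, n, le_rfl, h1, h5⟩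
  have hteq : -(x ^ 2) / (2 * (y + c * x)) = -t := by rw [ht]; ring
  calc μ {ω | ∃ n : ℕ, x ≤ M n ω ∧ Var n ω ≤ y} ≤ μ (⋃ n, A n) := measure_mono hsubT
    _ = ⨆ n, μ (A n) := Directed.measure_iUnion (hAmono.directed_le)
    _ ≤ ENNReal.ofReal (Real.exp (-t)) := iSup_le hAbd
    _ = ENNReal.ofReal (Real.exp (-(x ^ 2) / (2 * (y + c * x)))) := by rw [hteq]
end

section
/- Let S be a finite set, P a row-stochastic S×S real matrix, and γ ∈ (0,1). For any vector φ ∈ ℝ^S, any state s ∈ S, any ε > 0 and any M > 1: if e_sᵀ Σ_{i=0}^∞ (γP)^i φ > ε, then e_sᵀ Σ_{i=0}^∞ (γP)^i clip(φ, ε(1−γ)/M) > (M−1)ε/M, where e_s is the coordinate unit vector at s. -/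
open Finset Matrix

/-- `clip x y = x · 𝟙[x ≥ y]`. -/
noncomputable def clip (x y : ℝ) : ℝ := if y ≤ x then x else 0

/-- For a finite set `S`, a row-stochastic matrix `P`, `γ ∈ (0,1)`,
`φ : S → ℝ`, a state `s`, `ε > 0` and `M > 1`: if `e_sᵀ ∑_{i=0}^∞ (γP)^i φ > ε`, then
`e_sᵀ ∑_{i=0}^∞ (γP)^i clip(φ, ε(1−γ)/M) > (M−1)ε/M`. -/
theorem stmt7 {S : Type*} [Fintype S] [DecidableEq S]
    (P : Matrix S S ℝ) (hP0 : ∀ s t, 0 ≤ P s t) (hP1 : ∀ s, ∑ t, P s t = 1)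
    (γ : ℝ) (hγ0 : 0 < γ) (hγ1 : γ < 1)
    (φ : S → ℝ) (s : S) (ε M : ℝ) (hε : 0 < ε) (hM : 1 < M)
    (h : ε < ∑' i : ℕ, γ ^ i * ((P ^ i) *ᵥ φ) s) :
    (M - 1) * ε / M
      < ∑' i : ℕ, γ ^ i * ((P ^ i) *ᵥ (fun t => clip (φ t) (ε * (1 - γ) / M))) s := by
  set c : ℝ := ε * (1 - γ) / M with hc
  have h1γ : (0:ℝ) < 1 - γ := by linarith
  have hM0 : (0:ℝ) < M := lt_trans one_pos hM
  have hc0 : 0 < c := by positivity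
  set ψ : S → ℝ := fun t => clip (φ t) c with hψ
  -- powers are entrywise nonneg and row-stochastic
  have hPow0 : ∀ (i : ℕ) (a b : S), 0 ≤ (P ^ i) a b := by
    intro i
    induction i with
    | zero => intro a b; rw [pow_zero, Matrix.one_apply]; split <;> norm_num
    | succ n ih =>
      intro a b
      rw [pow_succ, Matrix.mul_apply]
      exact Finset.sum_nonneg fun u _ => mul_nonneg (ih a u) (hP0 u b)
  have hPow1 : ∀ (i : ℕ) (a : S), ∑ b, (P ^ i) a b = 1 := by
    intro i
    induction i with
    | zero => intro a; simp [Matrix.one_apply]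
    | succ n ih =>
      intro a
      simp only [pow_succ, Matrix.mul_apply]
      rw [Finset.sum_comm]
      calc ∑ u, ∑ b, (P ^ n) a u * P u b
          = ∑ u, (P ^ n) a u * ∑ b, P u b := by
            simp [Finset.mul_sum]
        _ = 1 := by simp [hP1, ih a]
  -- bound on mulVec entries
  have hbound : ∀ (v : S → ℝ) (i : ℕ), |((P ^ i) *ᵥ v) s| ≤ ‖v‖ := by
    intro v i
    have : ((P ^ i) *ᵥ v) s = ∑ t, (P ^ i) s t * v t := by
      simp [Matrix.mulVec, dotProduct]
    rw [this]
    calc |∑ t, (P ^ i) s t * v t| ≤ ∑ t, |(P ^ i) s t * v t| :=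
          Finset.abs_sum_le_sum_abs _ _
      _ ≤ ∑ t, (P ^ i) s t * ‖v‖ := by
          apply Finset.sum_le_sum
          intro t _
          rw [abs_mul, abs_of_nonneg (hPow0 i s t)]
          exact mul_le_mul_of_nonneg_left (norm_le_pi_norm v t) (hPow0 i s t)
      _ = ‖v‖ := by rw [← Finset.sum_mul, hPow1 i s, one_mul]
  have hsummable : ∀ (v : S → ℝ), Summable (fun i : ℕ => γ ^ i * ((P ^ i) *ᵥ v) s) := by
    intro v
    apply Summable.of_norm_bounded
      ((summable_geometric_of_lt_one hγ0.le hγ1).mul_left ‖v‖)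
    intro i
    rw [Real.norm_eq_abs, abs_mul, abs_of_nonneg (pow_nonneg hγ0.le i), mul_comm]
    exact mul_le_mul_of_nonneg_right (hbound v i) (pow_nonneg hγ0.le i)
  have hsum1 := hsummable φ
  have hsum2 := hsummable ψ
  have hsum3 : Summable (fun i : ℕ => γ ^ i * c) :=
    (summable_geometric_of_lt_one hγ0.le hγ1).mul_right c
  -- termwise inequality
  have hterm : ∀ i : ℕ, γ ^ i * ((P ^ i) *ᵥ φ) s - γ ^ i * c
      ≤ γ ^ i * ((P ^ i) *ᵥ ψ) s := by
    intro i
    have hcs : ((P ^ i) *ᵥ φ) s - c ≤ ((P ^ i) *ᵥ ψ) s := by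
      have e1 : ((P ^ i) *ᵥ φ) s = ∑ t, (P ^ i) s t * φ t := by
        simp [Matrix.mulVec, dotProduct]
      have e2 : ((P ^ i) *ᵥ ψ) s = ∑ t, (P ^ i) s t * ψ t := by
        simp [Matrix.mulVec, dotProduct]
      have e3 : c = ∑ t, (P ^ i) s t * c := by
        rw [← Finset.sum_mul, hPow1 i s, one_mul]
      rw [e1, e2]
      nth_rewrite 1 [e3]
      rw [← Finset.sum_sub_distrib]
      apply Finset.sum_le_sum
      intro t _
      rw [← mul_sub]
      apply mul_le_mul_of_nonneg_left _ (hPow0 i s t)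
      simp only [hψ, clip]
      split
      · linarith
      · push_neg at *; linarith
    have := mul_le_mul_of_nonneg_left hcs (pow_nonneg hγ0.le i)
    linarith [this]
  have hle : ∑' i : ℕ, (γ ^ i * ((P ^ i) *ᵥ φ) s - γ ^ i * c)
      ≤ ∑' i : ℕ, γ ^ i * ((P ^ i) *ᵥ ψ) s :=
    Summable.tsum_le_tsum hterm (hsum1.sub hsum3) hsum2
  rw [Summable.tsum_sub hsum1 hsum3] at hle
  have hgeo : ∑' i : ℕ, γ ^ i * c = ε / M := by
    rw [tsum_mul_right, tsum_geometric_of_lt_one hγ0.le hγ1]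
    field_simp [hc]
    rw [hc, div_mul_cancel₀ _ hM0.ne']; ring
  rw [hgeo] at hle
  have hfin : (M - 1) * ε / M = ε - ε / M := by field_simp
  rw [hfin]
  linarith
end

section
/- Let S be a finite set, P a row-stochastic S×S real matrix, and γ ∈ (0,1). Let φ ∈ ℝ^S satisfy ‖φ‖_∞ ≤ 2/(1−γ), and let s ∈ S, ε > 0, M > 1, and H a nonnegative integer. If e_sᵀ Σ_{i=0}^∞ (γP)^i φ > ε, then the truncated clipped sum satisfies e_sᵀ Σ_{i=0}^{H−1} (γP)^i clip(φ, ε(1−γ)/M) > (M−1)ε/M − 2γ^H/(1−γ)², where e_s is the coordinate unit vector at s. -/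
open Finset Matrix

/-- For a finite set `S`, a row-stochastic matrix `P`, `γ ∈ (0,1)`, a vector
`φ` with `‖φ‖_∞ ≤ 2/(1−γ)`, a state `s`, `ε > 0`, `M > 1` and `H ≥ 0`: if
`e_sᵀ ∑_{i=0}^∞ (γP)^i φ > ε`, then the truncated clipped sum satisfies
`e_sᵀ ∑_{i=0}^{H−1} (γP)^i clip(φ, ε(1−γ)/M) > (M−1)ε/M − 2γ^H/(1−γ)²`. -/
theorem stmt8 {S : Type*} [Fintype S] [DecidableEq S]
    (P : Matrix S S ℝ) (hP0 : ∀ s t, 0 ≤ P s t) (hP1 : ∀ s, ∑ t, P s t = 1)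
    (γ : ℝ) (hγ0 : 0 < γ) (hγ1 : γ < 1)
    (φ : S → ℝ) (hφ : ∀ t, |φ t| ≤ 2 / (1 - γ))
    (s : S) (ε M : ℝ) (hε : 0 < ε) (hM : 1 < M) (H : ℕ)
    (h : ε < ∑' i : ℕ, γ ^ i * ((P ^ i) *ᵥ φ) s) :
    (M - 1) * ε / M - 2 * γ ^ H / (1 - γ) ^ 2
      < ∑ i ∈ Finset.range H,
          γ ^ i * ((P ^ i) *ᵥ (fun t => clip (φ t) (ε * (1 - γ) / M))) s := by
  have hγ' : (0:ℝ) < 1 - γ := by linarith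
  have hM0 : (0:ℝ) < M := by linarith
  set c : ℝ := ε * (1 - γ) / M with hc
  have hc0 : 0 < c := by positivity
  -- powers of P have nonnegative entries
  have hpow0 : ∀ (n : ℕ) (u t : S), 0 ≤ (P ^ n) u t := by
    intro n
    induction n with
    | zero =>
      intro u t
      by_cases h : u = t <;> simp [Matrix.one_apply, h]
    | succ n ih =>
      intro u t
      rw [pow_succ, Matrix.mul_apply]
      exact Finset.sum_nonneg fun k _ => mul_nonneg (ih u k) (hP0 k t)
  -- powers of P are row-stochastic
  have hpow1 : ∀ (n : ℕ) (u : S), ∑ t, (P ^ n) u t = 1 := by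
    intro n
    induction n with
    | zero => intro u; simp [Matrix.one_apply]
    | succ n ih =>
      intro u
      simp only [pow_succ, Matrix.mul_apply]
      rw [Finset.sum_comm]
      simp_rw [← Finset.mul_sum, hP1, mul_one]
      exact ih u
  set B : ℝ := 2 / (1 - γ) with hB
  have hB0 : 0 ≤ B := by positivity
  -- uniform bound on P^n *ᵥ φ
  have hbd : ∀ (n : ℕ) (u : S), |((P ^ n) *ᵥ φ) u| ≤ B := by
    intro n u
    simp only [Matrix.mulVec, dotProduct]
    calc |∑ t, (P ^ n) u t * φ t| ≤ ∑ t, |(P ^ n) u t * φ t| :=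
          Finset.abs_sum_le_sum_abs _ _
      _ ≤ ∑ t, (P ^ n) u t * B := by
          refine Finset.sum_le_sum fun t _ => ?_
          rw [abs_mul, abs_of_nonneg (hpow0 n u t)]
          exact mul_le_mul_of_nonneg_left (hφ t) (hpow0 n u t)
      _ = B := by rw [← Finset.sum_mul, hpow1, one_mul]
  set f : ℕ → ℝ := fun i => γ ^ i * ((P ^ i) *ᵥ φ) s with hf
  have habs : ∀ i, |f i| ≤ γ ^ i * B := by
    intro i
    rw [abs_mul, abs_of_nonneg (pow_nonneg hγ0.le i)]
    exact mul_le_mul_of_nonneg_left (hbd i s) (pow_nonneg hγ0.le i)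
  have hgsum : Summable (fun i : ℕ => γ ^ i * B) :=
    (summable_geometric_of_lt_one hγ0.le hγ1).mul_right B
  have hsum : Summable f := by
    refine Summable.of_abs ?_
    exact Summable.of_nonneg_of_le (fun i => abs_nonneg _) habs hgsum
  have hshift : Summable (fun i => f (i + H)) := (summable_nat_add_iff H).mpr hsum
  have hsplit := Summable.sum_add_tsum_nat_add H hsum
  -- tail bound
  have htail : |∑' i, f (i + H)| ≤ 2 * γ ^ H / (1 - γ) ^ 2 := by
    have h1 : |∑' i, f (i + H)| ≤ ∑' i, |f (i + H)| := by
      have h1' : Summable fun i => ‖f (i + H)‖ := by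
        simp only [Real.norm_eq_abs]; exact hshift.abs
      have := norm_tsum_le_tsum_norm h1'
      simp only [Real.norm_eq_abs] at this
      exact this
    have h2 : ∑' i, |f (i + H)| ≤ ∑' i : ℕ, γ ^ i * (γ ^ H * B) := by
      refine Summable.tsum_le_tsum (fun i => ?_) hshift.abs
        ((summable_geometric_of_lt_one hγ0.le hγ1).mul_right _)
      calc |f (i + H)| ≤ γ ^ (i + H) * B := habs _
        _ = γ ^ i * (γ ^ H * B) := by rw [pow_add]; ring
    have h3 : ∑' i : ℕ, γ ^ i * (γ ^ H * B) = 2 * γ ^ H / (1 - γ) ^ 2 := by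
      rw [tsum_mul_right, tsum_geometric_of_lt_one hγ0.le hγ1, hB]
      field_simp
    linarith
  -- lower bound on head
  have hhead : ε - 2 * γ ^ H / (1 - γ) ^ 2 < ∑ i ∈ Finset.range H, f i := by
    have : ∑ i ∈ Finset.range H, f i = (∑' i, f i) - ∑' i, f (i + H) := by
      linarith [hsplit]
    rw [this]
    have := abs_le.mp htail
    linarith
  -- clip bound
  have hclip : ∀ t, φ t - c ≤ clip (φ t) c := by
    intro t
    unfold clip
    split <;> linarith
  have hmono : ∀ i, ((P ^ i) *ᵥ φ) s - c ≤
      ((P ^ i) *ᵥ (fun t => clip (φ t) c)) s := by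
    intro i
    simp only [Matrix.mulVec, dotProduct]
    have : ∑ t, (P ^ i) s t * (φ t - c) ≤ ∑ t, (P ^ i) s t * clip (φ t) c :=
      Finset.sum_le_sum fun t _ =>
        mul_le_mul_of_nonneg_left (hclip t) (hpow0 i s t)
    calc (∑ t, (P ^ i) s t * φ t) - c
        = ∑ t, (P ^ i) s t * (φ t - c) := by
          simp only [mul_sub, Finset.sum_sub_distrib, ← Finset.sum_mul, hpow1, one_mul]
      _ ≤ _ := this
  -- geometric sum bound
  have hgeom : ∑ i ∈ Finset.range H, γ ^ i ≤ 1 / (1 - γ) := by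
    have := Summable.sum_le_tsum (Finset.range H)
      (fun i _ => pow_nonneg hγ0.le i) (summable_geometric_of_lt_one hγ0.le hγ1)
    rwa [tsum_geometric_of_lt_one hγ0.le hγ1, inv_eq_one_div] at this
  have hmain : ∑ i ∈ Finset.range H, (f i - γ ^ i * c) ≤
      ∑ i ∈ Finset.range H,
        γ ^ i * ((P ^ i) *ᵥ (fun t => clip (φ t) c)) s := by
    refine Finset.sum_le_sum fun i _ => ?_
    have hγi : (0:ℝ) ≤ γ ^ i := pow_nonneg hγ0.le i
    have h' := mul_le_mul_of_nonneg_left (hmono i) hγi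
    rw [mul_sub] at h'
    simp only [hf]
    linarith
  have hsub : ∑ i ∈ Finset.range H, (f i - γ ^ i * c)
      = (∑ i ∈ Finset.range H, f i) - (∑ i ∈ Finset.range H, γ ^ i) * c := by
    rw [Finset.sum_sub_distrib, Finset.sum_mul]
  have hcM : c / (1 - γ) = ε / M := by
    rw [hc]; field_simp
  have hge : (∑ i ∈ Finset.range H, γ ^ i) * c ≤ ε / M := by
    rw [← hcM]
    calc (∑ i ∈ Finset.range H, γ ^ i) * c ≤ (1 / (1 - γ)) * c :=
          mul_le_mul_of_nonneg_right hgeom hc0.le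
      _ = c / (1 - γ) := by ring
  have hMε : (M - 1) * ε / M = ε - ε / M := by field_simp
  calc (M - 1) * ε / M - 2 * γ ^ H / (1 - γ) ^ 2
      = (ε - 2 * γ ^ H / (1 - γ) ^ 2) - ε / M := by rw [hMε]; ring
    _ < (∑ i ∈ Finset.range H, f i) - (∑ i ∈ Finset.range H, γ ^ i) * c := by
        linarith
    _ = ∑ i ∈ Finset.range H, (f i - γ ^ i * c) := hsub.symm
    _ ≤ _ := hmain
end

section
/- Let H be a positive integer and define the sequence (d_j)_{j≥1} by d_1 = H and d_{j+1} = ⌊(1 + 1/H) d_j⌋. Then for every integer J ≥ 1, Σ_{j=1}^{J} √(d_j) ≤ 10 · √( H · Σ_{j=1}^{J} d_j ). -/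
open Finset

private lemma sqrt_pow' {x : ℝ} (hx : 0 ≤ x) (n : ℕ) :
    Real.sqrt (x ^ n) = Real.sqrt x ^ n := by
  induction n with
  | zero => simp
  | succ n ih => rw [pow_succ, pow_succ, Real.sqrt_mul (by positivity), ih]

set_option maxHeartbeats 1000000 in
/-- Let `H ≥ 1` and let `d 1 = H`, `d (j+1) = ⌊(1 + 1/H) · d j⌋` for `j ≥ 1`.
Then for every `J ≥ 1`, `∑_{j=1}^J √(d j) ≤ 10 √(H ∑_{j=1}^J d j)`. -/
theorem stmt10 (H : ℕ) (hH : 1 ≤ H) (d : ℕ → ℕ)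
    (hd1 : d 1 = H)
    (hrec : ∀ j, 1 ≤ j → d (j + 1) = ⌊(1 + 1 / (H : ℝ)) * (d j : ℝ)⌋₊)
    (J : ℕ) (hJ : 1 ≤ J) :
    ∑ j ∈ Finset.Icc 1 J, Real.sqrt (d j)
      ≤ 10 * Real.sqrt ((H : ℝ) * ∑ j ∈ Finset.Icc 1 J, (d j : ℝ)) := by
  have hH1 : (1:ℝ) ≤ (H:ℝ) := by exact_mod_cast hH
  have hHpos : (0:ℝ) < H := by linarith
  -- nat form of the recurrence
  have hrecN : ∀ j, 1 ≤ j → d (j+1) = d j + d j / H := by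
    intro j hj
    rw [hrec j hj]
    have : (1 + 1 / (H : ℝ)) * (d j : ℝ) = (d j : ℝ) / (H : ℝ) + (d j : ℕ) := by
      push_cast; field_simp; ring
    rw [this, Nat.floor_add_natCast (by positivity), Nat.floor_div_natCast, Nat.floor_natCast]
    omega
  have hge : ∀ j, 1 ≤ j → H ≤ d j := by
    intro j hj
    induction j with
    | zero => omega
    | succ n ih =>
      by_cases hn : 1 ≤ n
      · rw [hrecN n hn]
        exact le_trans (ih hn) (Nat.le_add_right _ _)
      · have hn0 : n = 0 := by omega
        subst hn0; rw [hd1]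
  -- key nat inequality : d j ≤ 2 * H * (d j / H)
  have hdiv : ∀ j, 1 ≤ j → d j ≤ 2 * H * (d j / H) := by
    intro j hj
    have h1 := Nat.div_add_mod (d j) H
    have h2 : d j % H < H := Nat.mod_lt _ (by omega)
    have h3 : 1 ≤ d j / H := (Nat.one_le_div_iff (by omega)).2 (hge j hj)
    nlinarith [h1, h2, h3]
  -- growth bounds
  have hA : ∀ j, 1 ≤ j → (1 + 1/(2*(H:ℝ))) * (d j : ℝ) ≤ (d (j+1) : ℝ) := by
    intro j hj
    rw [hrecN j hj]
    push_cast
    have h1 : (d j : ℝ) ≤ 2 * H * ((d j / H : ℕ) : ℝ) := by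
      have := hdiv j hj; exact_mod_cast this
    have h2 : (d j : ℝ) / (2*H) ≤ ((d j / H : ℕ) : ℝ) := by
      rw [div_le_iff₀ (by positivity)]; linarith
    have : (1 + 1/(2*(H:ℝ))) * (d j : ℝ) = (d j : ℝ) + (d j : ℝ) / (2*H) := by
      field_simp
    rw [this]; linarith
  have hB : ∀ j, 1 ≤ j → (d (j+1) : ℝ) ≤ (1 + 1/(H:ℝ)) * (d j : ℝ) := by
    intro j hj
    rw [hrec j hj]
    exact Nat.floor_le (by positivity)
  set s : ℝ := 1 + 1/(2*(H:ℝ)) with hs_def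
  set r : ℝ := 1 + 1/(H:ℝ) with hr_def
  have hs1 : 1 < s := by rw [hs_def]; have : (0:ℝ) < 1/(2*H) := by positivity
                         linarith
  have hr1 : 1 < r := by rw [hr_def]; have : (0:ℝ) < 1/H := by positivity
                         linarith
  have hU : ∀ k j, 1 ≤ j → (d j : ℝ) * s ^ k ≤ (d (j+k) : ℝ) := by
    intro k
    induction k with
    | zero => intro j hj; simp
    | succ k ih =>
      intro j hj
      have h1 := ih j hj
      have h2 := hA (j+k) (by omega)
      calc (d j : ℝ) * s ^ (k+1) = s * ((d j : ℝ) * s ^ k) := by ring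
        _ ≤ s * (d (j+k) : ℝ) := by
            apply mul_le_mul_of_nonneg_left h1 (by linarith)
        _ ≤ (d (j+k+1) : ℝ) := by have := hA (j+k) (by omega); linarith [this]
        _ = (d (j+(k+1)) : ℝ) := by ring_nf
  have hL : ∀ k j, 1 ≤ j → (d (j+k) : ℝ) ≤ (d j : ℝ) * r ^ k := by
    intro k
    induction k with
    | zero => intro j hj; simp
    | succ k ih =>
      intro j hj
      have h1 := ih j hj
      have h2 := hB (j+k) (by omega)
      have hdj : (0:ℝ) ≤ (d j : ℝ) := by positivity
      calc (d (j+(k+1)) : ℝ) = (d (j+k+1) : ℝ) := by ring_nf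
        _ ≤ r * (d (j+k) : ℝ) := by linarith
        _ ≤ r * ((d j : ℝ) * r ^ k) := by
            apply mul_le_mul_of_nonneg_left h1 (by linarith)
        _ = (d j : ℝ) * r ^ (k+1) := by ring
  have hdJpos : (0:ℝ) < (d J : ℝ) := by
    have := hge J hJ; have : (1:ℕ) ≤ d J := le_trans hH this
    exact_mod_cast Nat.lt_of_lt_of_le Nat.zero_lt_one this
  set S : ℝ := ∑ j ∈ Finset.Icc 1 J, (d j : ℝ) with hS_def
  have hSpos : (0:ℝ) < S := by
    rw [hS_def]
    apply Finset.sum_pos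
    · intro i hi
      simp only [mem_Icc] at hi
      have := hge i hi.1
      have : (1:ℕ) ≤ d i := le_trans hH this
      exact_mod_cast Nat.lt_of_lt_of_le Nat.zero_lt_one this
    · exact ⟨1, by simp [mem_Icc]; omega⟩
  have hLHSnn : 0 ≤ ∑ j ∈ Finset.Icc 1 J, Real.sqrt (d j) :=
    Finset.sum_nonneg fun i _ => Real.sqrt_nonneg _
  have hRHSeq : 10 * Real.sqrt ((H:ℝ) * S) = Real.sqrt (100 * ((H:ℝ) * S)) := by
    rw [Real.sqrt_mul (by norm_num : (0:ℝ) ≤ 100),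
        show (100:ℝ) = 10^2 by norm_num, Real.sqrt_sq (by norm_num)]
  have hre : ∀ x : ℝ, ∑ j ∈ Finset.Icc 1 J, x ^ (J - j) = ∑ i ∈ Finset.range J, x ^ i := by
    intro x
    rw [← Finset.Ico_add_one_right_eq_Icc, Finset.sum_Ico_eq_sum_range]
    have hJ1 : J + 1 - 1 = J := by omega
    rw [hJ1, ← Finset.sum_range_reflect]
    apply Finset.sum_congr rfl
    intro i hi
    simp only [mem_range] at hi
    congr 1
    omega
  by_cases hcase : J ≤ H
  · -- Cauchy–Schwarz case
    have hcs := sq_sum_le_card_mul_sum_sq (s := Finset.Icc 1 J)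
      (f := fun j => Real.sqrt (d j))
    have hcard : (#(Finset.Icc 1 J) : ℝ) = (J : ℝ) := by
      rw [Nat.card_Icc]; push_cast; ring_nf
    have hsq : ∑ j ∈ Finset.Icc 1 J, Real.sqrt (d j) ^ 2 = S := by
      rw [hS_def]
      apply Finset.sum_congr rfl
      intro i _; exact Real.sq_sqrt (by positivity)
    rw [hRHSeq, Real.le_sqrt hLHSnn (by positivity)]
    calc (∑ j ∈ Finset.Icc 1 J, Real.sqrt (d j)) ^ 2
        ≤ (#(Finset.Icc 1 J) : ℝ) * ∑ j ∈ Finset.Icc 1 J, Real.sqrt (d j) ^ 2 := hcs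
      _ = (J : ℝ) * S := by rw [hcard, hsq]
      _ ≤ 100 * ((H:ℝ) * S) := by
          have : (J:ℝ) ≤ (H:ℝ) := by exact_mod_cast hcase
          nlinarith
  · -- geometric case : H < J
    push_neg at hcase
    have hHJ : (H:ℝ) ≤ (J:ℝ) := by exact_mod_cast le_of_lt hcase
    set q : ℝ := (Real.sqrt s)⁻¹ with hq_def
    have hsq1 : 1 < Real.sqrt s := by
      rw [show (1:ℝ) = Real.sqrt 1 by simp]
      exact Real.sqrt_lt_sqrt (by norm_num) hs1
    have hq0 : 0 < q := by rw [hq_def]; positivity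
    have hq1 : q < 1 := by rw [hq_def]; exact inv_lt_one_of_one_lt₀ hsq1
    -- per-term upper bound
    have hterm : ∀ j ∈ Finset.Icc 1 J, Real.sqrt (d j) ≤ Real.sqrt (d J) * q ^ (J - j) := by
      intro j hj
      simp only [mem_Icc] at hj
      have hJj : j + (J - j) = J := by omega
      have h1 : (d j : ℝ) * s ^ (J - j) ≤ (d J : ℝ) := by
        have := hU (J - j) j hj.1; rwa [hJj] at this
      have hsk : (0:ℝ) < s ^ (J - j) := by positivity
      have h2 : (d j : ℝ) ≤ (d J : ℝ) * (s ^ (J - j))⁻¹ := by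
        rw [le_mul_inv_iff₀ hsk]; linarith
      calc Real.sqrt (d j) ≤ Real.sqrt ((d J : ℝ) * (s ^ (J - j))⁻¹) :=
            Real.sqrt_le_sqrt h2
        _ = Real.sqrt (d J) * q ^ (J - j) := by
            rw [Real.sqrt_mul (by positivity), Real.sqrt_inv, sqrt_pow' (by linarith),
                hq_def, inv_pow]
    -- sum of the geometric tail
    have hgsum : ∑ j ∈ Finset.Icc 1 J, q ^ (J - j) ≤ (1 - q)⁻¹ := by
      rw [hre q, geom_sum_eq (ne_of_lt hq1)]
      have heq : (q ^ J - 1) / (q - 1) = (1 - q ^ J) / (1 - q) := by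
        rw [div_eq_div_iff (by linarith) (by linarith)]; ring
      have hqJ : (0:ℝ) ≤ q ^ J := by positivity
      rw [heq]
      calc (1 - q ^ J) / (1 - q) ≤ 1 / (1 - q) := by gcongr <;> linarith
        _ = (1 - q)⁻¹ := one_div _
    have hqbound : (1 - q)⁻¹ ≤ 2 * (2*(H:ℝ) + 1) := by
      have hq2 : q ^ 2 = s⁻¹ := by
        rw [hq_def, inv_pow, Real.sq_sqrt (by linarith)]
      have h1q2 : 1 - q^2 = (2*(H:ℝ)+1)⁻¹ := by
        rw [hq2, hs_def]
        field_simp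
        ring
      have h1 : (2 * (2*(H:ℝ)+1))⁻¹ ≤ 1 - q := by
        have hfac : (1 - q) * (1 + q) = 1 - q^2 := by ring
        have h2 : 1 + q ≤ 2 := by linarith
        have h3 : (0:ℝ) < 2*(H:ℝ)+1 := by linarith
        have h4 : (2*(H:ℝ)+1)⁻¹ ≤ (1 - q) * 2 := by
          nlinarith [h1q2, hfac, inv_pos.2 h3]
        have h5 : (2 * (2*(H:ℝ)+1))⁻¹ = (2*(H:ℝ)+1)⁻¹ / 2 := by
          rw [mul_inv]; ring
        linarith
      rw [inv_le_comm₀ (by linarith : (0:ℝ) < 1 - q) (by positivity)]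
      exact h1
    -- upper bound on LHS
    have hupper : ∑ j ∈ Finset.Icc 1 J, Real.sqrt (d j)
        ≤ Real.sqrt (d J) * (2 * (2*(H:ℝ) + 1)) := by
      calc ∑ j ∈ Finset.Icc 1 J, Real.sqrt (d j)
          ≤ ∑ j ∈ Finset.Icc 1 J, Real.sqrt (d J) * q ^ (J - j) :=
            Finset.sum_le_sum hterm
        _ = Real.sqrt (d J) * ∑ j ∈ Finset.Icc 1 J, q ^ (J - j) := by
            rw [Finset.mul_sum]
        _ ≤ Real.sqrt (d J) * (1 - q)⁻¹ := by
            apply mul_le_mul_of_nonneg_left hgsum (Real.sqrt_nonneg _)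
        _ ≤ Real.sqrt (d J) * (2 * (2*(H:ℝ) + 1)) := by
            apply mul_le_mul_of_nonneg_left hqbound (Real.sqrt_nonneg _)
    -- lower bound on S
    have hlower : (d J : ℝ) * ((H:ℝ) + 1) / 2 ≤ S := by
      have htermL : ∀ j ∈ Finset.Icc 1 J, (d J : ℝ) * (r⁻¹) ^ (J - j) ≤ (d j : ℝ) := by
        intro j hj
        simp only [mem_Icc] at hj
        have hJj : j + (J - j) = J := by omega
        have h1 : (d J : ℝ) ≤ (d j : ℝ) * r ^ (J - j) := by
          have := hL (J - j) j hj.1; rwa [hJj] at this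
        have hrk : (0:ℝ) < r ^ (J - j) := by positivity
        rw [inv_pow, mul_inv_le_iff₀ hrk]
        linarith
      have hrinv1 : r⁻¹ < 1 := by
        rw [inv_lt_one_iff₀]; right; exact hr1
      have hrinv0 : 0 < r⁻¹ := by positivity
      have hpowJ : (r⁻¹) ^ J ≤ 1/2 := by
        have h2r : (2:ℝ) ≤ r ^ H := by
          have h1H : (0:ℝ) < 1/(H:ℝ) := by positivity
          have := one_add_mul_le_pow (a := 1/(H:ℝ)) (by linarith) H
          have hH2 : (H:ℝ) * (1/(H:ℝ)) = 1 := by field_simp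
          rw [hr_def]
          nlinarith [this]
        have h1 : (r⁻¹) ^ J ≤ (r⁻¹) ^ H :=
          pow_le_pow_of_le_one (le_of_lt hrinv0) (le_of_lt hrinv1) (by omega)
        have h2 : (r⁻¹) ^ H = (r ^ H)⁻¹ := by rw [inv_pow]
        have h3 : (r ^ H)⁻¹ ≤ 1/2 := by
          rw [inv_le_comm₀ (by positivity) (by norm_num)]
          linarith
        linarith [h1, h2 ▸ h3]
      have hgeom : ∑ i ∈ Finset.range J, (r⁻¹) ^ i = (1 - (r⁻¹)^J) / (1 - r⁻¹) := by
        rw [geom_sum_eq (ne_of_lt hrinv1)]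
        rw [div_eq_div_iff (by linarith) (by linarith)]
        ring
      have h1r : 1 - r⁻¹ = ((H:ℝ) + 1)⁻¹ := by
        rw [hr_def]
        field_simp
        ring
      calc (d J : ℝ) * ((H:ℝ) + 1) / 2 = (d J : ℝ) * (2⁻¹ * ((H:ℝ)+1)) := by ring
        _ ≤ (d J : ℝ) * ((1 - (r⁻¹)^J) / (1 - r⁻¹)) := by
            apply mul_le_mul_of_nonneg_left _ (le_of_lt hdJpos)
            rw [h1r, div_eq_mul_inv, inv_inv]
            nlinarith [hpowJ, hH1]
        _ = (d J : ℝ) * ∑ i ∈ Finset.range J, (r⁻¹) ^ i := by rw [hgeom]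
        _ = ∑ j ∈ Finset.Icc 1 J, (d J : ℝ) * (r⁻¹) ^ (J - j) := by
            rw [← hre r⁻¹, Finset.mul_sum]
        _ ≤ S := Finset.sum_le_sum htermL
    -- combine
    rw [hRHSeq]
    have hfin : Real.sqrt (d J) * (2 * (2*(H:ℝ) + 1)) ≤ Real.sqrt (100 * ((H:ℝ) * S)) := by
      rw [show Real.sqrt (d J) * (2 * (2*(H:ℝ) + 1)) = (2 * (2*(H:ℝ)+1)) * Real.sqrt (d J) by ring,
          ← Real.sqrt_sq (x := 2 * (2*(H:ℝ)+1)) (by positivity), ← Real.sqrt_mul (by positivity)]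
      apply Real.sqrt_le_sqrt
      have hkey : (H:ℝ)^2 * (d J : ℝ) ≤ 2 * ((H:ℝ) * S) := by
        have : (H:ℝ) * ((d J : ℝ) * ((H:ℝ) + 1) / 2) ≤ (H:ℝ) * S :=
          mul_le_mul_of_nonneg_left hlower (by linarith)
        nlinarith [hdJpos]
      nlinarith [hdJpos, hSpos, hH1, hkey]
    linarith [hupper, hfin]
end

section
/- Let H and B be positive integers, let (d_j)_{j≥1} be defined by d_1 = H and d_{j+1} = ⌊(1 + 1/H) d_j⌋, and define the type-I stage lengths ě_j := d_{⌈j/B⌉}. Then for every integer j ≥ HB, ě_{j+1} ≤ (2/(HB)) · Σ_{i=1}^{j} ě_i. -/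
open Finset

/-- Let `H, B ≥ 1`, let `d 1 = H`, `d (j+1) = ⌊(1 + 1/H) · d j⌋` for `j ≥ 1`,
and define the type-I stage lengths `ě j := d ⌈j/B⌉`.  Then for every `j ≥ H·B`,
`ě (j+1) ≤ (2/(H·B)) · ∑_{i=1}^j ě i`. -/
theorem stmt11 (H B : ℕ) (hH : 1 ≤ H) (hB : 1 ≤ B) (d : ℕ → ℕ)
    (hd1 : d 1 = H)
    (hrec : ∀ j, 1 ≤ j → d (j + 1) = ⌊(1 + 1 / (H : ℝ)) * (d j : ℝ)⌋₊) :
    ∀ j, H * B ≤ j →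
      (d ⌈((j + 1 : ℕ) : ℝ) / (B : ℝ)⌉₊ : ℝ)
        ≤ 2 / ((H : ℝ) * (B : ℝ)) * ∑ i ∈ Finset.Icc 1 j, (d ⌈(i : ℝ) / (B : ℝ)⌉₊ : ℝ) := by
  have hHR : (0:ℝ) < (H:ℝ) := by exact_mod_cast hH
  have hBR : (0:ℝ) < (B:ℝ) := by exact_mod_cast hB
  -- growth: d (k+1) ≥ H + k
  have grow : ∀ k, H + k ≤ d (k + 1) := by
    intro k
    induction k with
    | zero => simp [hd1]
    | succ n ih =>
      rw [hrec (n+1) (by omega)]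
      rw [Nat.le_floor_iff (by positivity)]
      have hx : ((H:ℝ) + n) ≤ (d (n+1) : ℝ) := by exact_mod_cast ih
      have h1 : (1:ℝ) ≤ (d (n+1) : ℝ) / H := by
        rw [le_div_iff₀ hHR]; linarith
      have : (1 + 1 / (H:ℝ)) * (d (n+1) : ℝ) = (d (n+1) : ℝ) + (d (n+1) : ℝ) / H := by
        field_simp
      rw [this]
      push_cast
      linarith
  -- key: H * d (k+1) ≤ (H+1) * d k for k ≥ 1
  have key : ∀ k, 1 ≤ k → H * d (k + 1) ≤ (H + 1) * d k := by
    intro k hk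
    have : (d (k+1) : ℝ) ≤ (1 + 1/(H:ℝ)) * (d k : ℝ) := by
      rw [hrec k hk]
      exact Nat.floor_le (by positivity)
    have h2 : (H : ℝ) * (d (k+1) : ℝ) ≤ ((H:ℝ) + 1) * (d k : ℝ) := by
      have := mul_le_mul_of_nonneg_left this (le_of_lt hHR)
      calc (H:ℝ) * (d (k+1):ℝ) ≤ (H:ℝ) * ((1 + 1/(H:ℝ)) * (d k:ℝ)) := this
        _ = ((H:ℝ)+1) * (d k:ℝ) := by field_simp
    exact_mod_cast h2
  -- telescoping: H * d (n+1) ≤ Σ_{k=1}^n d k + H^2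
  have tel : ∀ n, H * d (n + 1) ≤ (∑ k ∈ Finset.Icc 1 n, d k) + H * H := by
    intro n
    induction n with
    | zero => simp [hd1]
    | succ n ih =>
      have h1 := key (n+1) (by omega)
      rw [Finset.sum_Icc_succ_top (by omega)]
      have : (H + 1) * d (n+1) = H * d (n+1) + d (n+1) := by ring
      omega
  -- hence for n ≥ H: H * d (n+1) ≤ 2 * Σ
  have tel2 : ∀ n, H ≤ n → H * d (n + 1) ≤ 2 * ∑ k ∈ Finset.Icc 1 n, d k := by
    intro n hn
    have h1 := tel n
    have h2 : 2 * H ≤ d (n + 1) := le_trans (by omega) (grow n)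
    have h3 : 2 * (H * H) ≤ H * d (n + 1) := by
      calc 2 * (H * H) = H * (2 * H) := by ring
        _ ≤ H * d (n+1) := Nat.mul_le_mul_left _ h2
    set a := ∑ k ∈ Finset.Icc 1 n, d k
    set b := H * d (n+1)
    set c := H * H
    omega
  -- ceiling computation on a stage
  have ceil_eq : ∀ n i : ℕ, B * n < i → i ≤ B * (n + 1) → ⌈(i : ℝ) / (B : ℝ)⌉₊ = n + 1 := by
    intro n i h1 h2
    apply le_antisymm
    · apply Nat.ceil_le.mpr
      rw [div_le_iff₀ hBR]
      have : (i : ℝ) ≤ (B * (n+1) : ℕ) := by exact_mod_cast h2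
      push_cast at this ⊢
      linarith
    · have : (n : ℝ) < (i : ℝ) / (B : ℝ) := by
        rw [lt_div_iff₀ hBR]
        have : ((B * n : ℕ) : ℝ) < (i : ℝ) := by exact_mod_cast h1
        push_cast at this ⊢
        linarith
      exact Nat.lt_ceil.mpr this
  -- regrouping
  have regroup : ∀ n, ∑ i ∈ Finset.Icc 1 (B * n), d ⌈(i : ℝ) / (B : ℝ)⌉₊
      = B * ∑ k ∈ Finset.Icc 1 n, d k := by
    intro n
    induction n with
    | zero => simp
    | succ n ih =>
      have hIcc : ∀ m : ℕ, Finset.Icc 1 m = Finset.Ioc 0 m := by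
        intro m; rw [← Finset.Icc_add_one_left_eq_Ioc]; rfl
      have hsplit : (∑ i ∈ Finset.Ioc 0 (B * n), d ⌈(i : ℝ) / (B : ℝ)⌉₊)
          + ∑ i ∈ Finset.Ioc (B * n) (B * (n+1)), d ⌈(i : ℝ) / (B : ℝ)⌉₊
          = ∑ i ∈ Finset.Ioc 0 (B * (n+1)), d ⌈(i : ℝ) / (B : ℝ)⌉₊ :=
        Finset.sum_Ioc_consecutive _ (Nat.zero_le _) (Nat.mul_le_mul_left _ (by omega))
      have hconst : ∑ i ∈ Finset.Ioc (B * n) (B * (n+1)), d ⌈(i : ℝ) / (B : ℝ)⌉₊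
          = B * d (n + 1) := by
        have heq : ∀ i ∈ Finset.Ioc (B * n) (B * (n+1)),
            d ⌈(i : ℝ) / (B : ℝ)⌉₊ = d (n + 1) := by
          intro i hi
          rw [Finset.mem_Ioc] at hi
          rw [ceil_eq n i hi.1 hi.2]
        rw [Finset.sum_congr rfl heq, Finset.sum_const, Nat.card_Ioc, smul_eq_mul]
        have : B * (n+1) - B * n = B := by rw [Nat.mul_succ]; omega
        rw [this]
      rw [hIcc, ← hsplit, ← hIcc, ih, hconst, hIcc n, ← hIcc n,
        Finset.sum_Icc_succ_top (by omega : 1 ≤ n + 1)]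
      ring
  -- main argument
  intro j hj
  set m := ⌈((j + 1 : ℕ) : ℝ) / (B : ℝ)⌉₊ with hm
  -- m ≥ H + 1
  have hm1 : H + 1 ≤ m := by
    have : (H : ℝ) < ((j + 1 : ℕ) : ℝ) / (B : ℝ) := by
      rw [lt_div_iff₀ hBR]
      have : H * B < j + 1 := by omega
      exact_mod_cast this
    exact Nat.lt_ceil.mpr this
  -- B * (m - 1) ≤ j
  have hm2 : B * (m - 1) ≤ j := by
    by_contra hcon
    push_neg at hcon
    have h1 : j + 1 ≤ B * (m - 1) := hcon
    have h2 : ((j+1:ℕ):ℝ) / (B:ℝ) ≤ ((m - 1 : ℕ) : ℝ) := by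
      rw [div_le_iff₀ hBR]
      have : ((j+1:ℕ):ℝ) ≤ ((B * (m-1) : ℕ) : ℝ) := by exact_mod_cast h1
      push_cast at this ⊢
      linarith
    have := Nat.ceil_le.mpr h2
    omega
  -- nat version of the claim
  have hmain : d m * (H * B) ≤ 2 * ∑ i ∈ Finset.Icc 1 j, d ⌈(i : ℝ) / (B : ℝ)⌉₊ := by
    have hsub : ∑ i ∈ Finset.Icc 1 (B * (m-1)), d ⌈(i : ℝ) / (B : ℝ)⌉₊
        ≤ ∑ i ∈ Finset.Icc 1 j, d ⌈(i : ℝ) / (B : ℝ)⌉₊ :=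
      Finset.sum_le_sum_of_subset (Finset.Icc_subset_Icc_right hm2)
    have hreg := regroup (m - 1)
    have ht := tel2 (m - 1) (by omega)
    have hmm : m - 1 + 1 = m := by omega
    rw [hmm] at ht
    calc d m * (H * B) = B * (H * d m) := by ring
      _ ≤ B * (2 * ∑ k ∈ Finset.Icc 1 (m-1), d k) := Nat.mul_le_mul_left _ ht
      _ = 2 * (B * ∑ k ∈ Finset.Icc 1 (m-1), d k) := by ring
      _ = 2 * ∑ i ∈ Finset.Icc 1 (B * (m-1)), d ⌈(i : ℝ) / (B : ℝ)⌉₊ := by rw [hreg]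
      _ ≤ 2 * ∑ i ∈ Finset.Icc 1 j, d ⌈(i : ℝ) / (B : ℝ)⌉₊ := by omega
  -- convert to ℝ
  have hcast : ∑ i ∈ Finset.Icc 1 j, (d ⌈(i : ℝ) / (B : ℝ)⌉₊ : ℝ)
      = ((∑ i ∈ Finset.Icc 1 j, d ⌈(i : ℝ) / (B : ℝ)⌉₊ : ℕ) : ℝ) := by
    push_cast; rfl
  rw [hcast, div_mul_eq_mul_div, le_div_iff₀ (by positivity)]
  calc (d m : ℝ) * ((H:ℝ) * (B:ℝ)) = ((d m * (H * B) : ℕ) : ℝ) := by push_cast; ring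
    _ ≤ ((2 * ∑ i ∈ Finset.Icc 1 j, d ⌈(i : ℝ) / (B : ℝ)⌉₊ : ℕ) : ℝ) := by exact_mod_cast hmain
    _ = 2 * ((∑ i ∈ Finset.Icc 1 j, d ⌈(i : ℝ) / (B : ℝ)⌉₊ : ℕ) : ℝ) := by push_cast; ring
end

section
/- In a finite discounted MDP, fix a state s₀ and an integer H ≥ 1/(1−γ), and define the truncated discounted occupancy weights w(s,a) := 𝟙[a = π(s)] · Σ_{i=0}^{H−1} e_{s₀}ᵀ (γ P_π)^i e_s, and the variance 𝕍(P_{s,a}, V*) := ⟨P_{s,a}, (V*)²⟩ − ⟨P_{s,a}, V*⟩². Then Σ_{s,a} w(s,a) · 𝕍(P_{s,a}, V*) ≤ 2/(1−γ)² + 2H/(1−γ) + (2/(1−γ)) · (V*(s₀) − V^π(s₀)); in particular this total weighted variance is at most 6H². -/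
open Finset Matrix

private lemma stmt13_aux_quad (M X g : ℝ) (h : g ≤ M * X) : g - X ^ 2 ≤ M ^ 2 / 4 := by
  nlinarith [sq_nonneg (X - M / 2)]

private lemma stmt13_aux_crude (M h Δ L : ℝ) (hMpos : 0 < M) (hM16 : M ≤ 16) (hMH : M ≤ h)
    (hΔ0 : 0 ≤ Δ) (hL : L ≤ M ^ 2 / 4 * M) :
    L ≤ 2 * M ^ 2 + 2 * h * M + 2 * M * Δ := by
  nlinarith [mul_le_mul_of_nonneg_left hM16 (sq_nonneg M),
    mul_le_mul_of_nonneg_right hMH hMpos.le, mul_nonneg hMpos.le hΔ0, sq_nonneg M]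

private lemma stmt13_aux_neg (M h Δ L : ℝ) (hMpos : 0 < M) (hMH : M ≤ h)
    (hΔ0 : 0 ≤ Δ) (hL : L ≤ 0) :
    L ≤ 2 * M ^ 2 + 2 * h * M + 2 * M * Δ := by
  nlinarith [mul_le_mul_of_nonneg_right hMH hMpos.le, mul_nonneg hMpos.le hΔ0, sq_nonneg M]

private lemma stmt13_aux_high (γ M h Δ L : ℝ) (hγc : 15 / 16 < γ) (hMpos : 0 < M)
    (hMH : M ≤ h) (hΔ0 : 0 ≤ Δ) (hΔM : Δ ≤ M) (hL : 0 < L)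
    (hmain : γ ^ 2 * L ≤ 3 * M ^ 2 + 2 * M * (Δ : ℝ)) :
    L ≤ 2 * M ^ 2 + 2 * h * M + 2 * M * Δ := by
  have hγ2 : (225 : ℝ) / 256 ≤ γ ^ 2 := by nlinarith
  have h1 : (225 : ℝ) / 256 * L ≤ 3 * M ^ 2 + 2 * M * Δ :=
    le_trans (mul_le_mul_of_nonneg_right hγ2 hL.le) hmain
  nlinarith [mul_le_mul_of_nonneg_left hΔM hMpos.le,
    mul_le_mul_of_nonneg_right hMH hMpos.le]

private lemma stmt13_aux_six (M h Δ L : ℝ) (hMpos : 0 < M) (hMH : M ≤ h)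
    (hΔ0 : 0 ≤ Δ) (hΔM : Δ ≤ M) (hL : L ≤ 2 * M ^ 2 + 2 * h * M + 2 * M * Δ) :
    L ≤ 6 * h ^ 2 := by
  nlinarith [mul_le_mul_of_nonneg_right hMH hMpos.le,
    mul_le_mul_of_nonneg_left hΔM hMpos.le,
    mul_le_mul_of_nonneg_left hMH (le_trans hMpos.le hMH)]

/-- In a finite discounted MDP, fix a state `s₀` and an integer
`H ≥ 1/(1−γ)`, and define the truncated discounted occupancy weights
`w s a := 𝟙[a = π s] ∑_{i=0}^{H−1} e_{s₀}ᵀ (γ P_π)^i e_s` and the variance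
`𝕍(P_{s,a}, V*) := ⟨P_{s,a}, (V*)²⟩ − ⟨P_{s,a}, V*⟩²`.  Then
`∑_{s,a} w s a · 𝕍(P_{s,a}, V*) ≤ 2/(1−γ)² + 2H/(1−γ) + (2/(1−γ)) (V* s₀ − V^π s₀)`;
in particular the total weighted variance is at most `6 H²`. -/
theorem stmt13 {S A : Type*} [Fintype S] [DecidableEq S] [Fintype A] [Nonempty A]
    [DecidableEq A]
    (P : S → A → S → ℝ) (hP0 : ∀ s a s', 0 ≤ P s a s') (hP1 : ∀ s a, ∑ s', P s a s' = 1)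
    (r : S → A → ℝ) (hr : ∀ s a, r s a ∈ Set.Icc (0 : ℝ) 1)
    (γ : ℝ) (hγ0 : 0 < γ) (hγ1 : γ < 1)
    (Qstar : S → A → ℝ) (Vstar : S → ℝ)
    (hQ : ∀ s a, Qstar s a = r s a + γ * ∑ s', P s a s' * Vstar s')
    (hV : ∀ s, Vstar s = Finset.univ.sup' Finset.univ_nonempty (Qstar s))
    (π : S → A) (Vπ : S → ℝ)
    (hVπ : ∀ s, Vπ s = r s (π s) + γ * ∑ s', P s (π s) s' * Vπ s')
    (s₀ : S) (H : ℕ) (hH : 1 / (1 - γ) ≤ (H : ℝ)) :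
    let Pπ : Matrix S S ℝ := fun s s' => P s (π s) s'
    let w : S → A → ℝ := fun s a =>
      if a = π s then ∑ i ∈ Finset.range H, γ ^ i * (Pπ ^ i) s₀ s else 0
    let Var : S → A → ℝ := fun s a =>
      (∑ s', P s a s' * (Vstar s') ^ 2) - (∑ s', P s a s' * Vstar s') ^ 2
    (∑ s, ∑ a, w s a * Var s a
        ≤ 2 / (1 - γ) ^ 2 + 2 * H / (1 - γ) + 2 / (1 - γ) * (Vstar s₀ - Vπ s₀)) ∧
    (∑ s, ∑ a, w s a * Var s a ≤ 6 * (H : ℝ) ^ 2) := by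
  intro Pπ w Var
  have hγ01 : (0:ℝ) < 1 - γ := by linarith
  set M : ℝ := 1 / (1 - γ) with hMdef
  have hMpos : 0 < M := by positivity
  have hNS : Nonempty S := ⟨s₀⟩
  have hMeq : M * (1 - γ) = 1 := one_div_mul_cancel hγ01.ne'
  have hM1 : 1 ≤ M := by nlinarith
  have hMH : M ≤ (H:ℝ) := hH
  have hr0 : ∀ s a, 0 ≤ r s a := fun s a => (hr s a).1
  have hr1 : ∀ s a, r s a ≤ 1 := fun s a => (hr s a).2
  have hsum_const : ∀ s a (c : ℝ), ∑ s', P s a s' * c = c := by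
    intro s a c; rw [← Finset.sum_mul, hP1, one_mul]
  have hsum_mono : ∀ s a (f h : S → ℝ), (∀ s', f s' ≤ h s') →
      ∑ s', P s a s' * f s' ≤ ∑ s', P s a s' * h s' := by
    intro s a f h hf
    exact Finset.sum_le_sum fun s' _ => mul_le_mul_of_nonneg_left (hf s') (hP0 s a s')
  have hQleV : ∀ s a, Qstar s a ≤ Vstar s := by
    intro s a; rw [hV s]; exact Finset.le_sup' _ (mem_univ a)
  -- Vstar upper bound
  have hVub : ∀ s, Vstar s ≤ M := by
    obtain ⟨t, -, ht⟩ := Finset.exists_max_image (univ : Finset S) Vstar univ_nonempty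
    have hta : ∃ a, Vstar t = Qstar t a := by
      obtain ⟨a, -, ha⟩ := Finset.exists_mem_eq_sup' (univ_nonempty) (Qstar t)
      exact ⟨a, by rw [hV t, ha]⟩
    obtain ⟨a, ha⟩ := hta
    have h1 : ∑ s', P t a s' * Vstar s' ≤ Vstar t := by
      calc ∑ s', P t a s' * Vstar s' ≤ ∑ s', P t a s' * Vstar t :=
            hsum_mono t a _ _ fun s' => ht s' (mem_univ s')
        _ = Vstar t := hsum_const t a _
    have heq : Vstar t = r t a + γ * ∑ s', P t a s' * Vstar s' := by rw [ha, hQ t a]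
    have h2 : Vstar t ≤ 1 + γ * Vstar t := by
      have := mul_le_mul_of_nonneg_left h1 hγ0.le
      linarith [hr1 t a]
    have h3 : Vstar t ≤ M := by
      nlinarith
    intro s; exact le_trans (ht s (mem_univ s)) h3
  -- Vstar lower bound
  have hVlb : ∀ s, 0 ≤ Vstar s := by
    obtain ⟨t, -, ht⟩ := Finset.exists_min_image (univ : Finset S) Vstar univ_nonempty
    have h1 : Vstar t ≤ ∑ s', P t (π t) s' * Vstar s' := by
      calc Vstar t = ∑ s', P t (π t) s' * Vstar t := (hsum_const t (π t) _).symm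
        _ ≤ ∑ s', P t (π t) s' * Vstar s' := hsum_mono t (π t) _ _ fun s' => ht s' (mem_univ s')
    have h2 : γ * Vstar t ≤ Vstar t := by
      have h3 := hQleV t (π t)
      rw [hQ t (π t)] at h3
      have := hr0 t (π t)
      nlinarith
    intro s
    have : 0 ≤ Vstar t := by nlinarith
    exact le_trans this (ht s (mem_univ s))
  -- Vπ lower bound
  have hVπlb : ∀ s, 0 ≤ Vπ s := by
    obtain ⟨t, -, ht⟩ := Finset.exists_min_image (univ : Finset S) Vπ univ_nonempty
    have h1 : Vπ t ≤ ∑ s', P t (π t) s' * Vπ s' := by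
      calc Vπ t = ∑ s', P t (π t) s' * Vπ t := (hsum_const t (π t) _).symm
        _ ≤ ∑ s', P t (π t) s' * Vπ s' := hsum_mono t (π t) _ _ fun s' => ht s' (mem_univ s')
    have h2 : γ * Vπ t ≤ Vπ t := by
      have h3 := hVπ t
      have := hr0 t (π t)
      nlinarith
    intro s
    have : 0 ≤ Vπ t := by nlinarith
    exact le_trans this (ht s (mem_univ s))
  -- Vπ ≤ Vstar
  have hVπleV : ∀ s, Vπ s ≤ Vstar s := by
    obtain ⟨t, -, ht⟩ := Finset.exists_min_image (univ : Finset S)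
      (fun s => Vstar s - Vπ s) univ_nonempty
    have h1 : ∑ s', P t (π t) s' * (Vstar t - Vπ t) ≤
        ∑ s', P t (π t) s' * (Vstar s' - Vπ s') :=
      hsum_mono t (π t) _ _ fun s' => ht s' (mem_univ s')
    have h2 : ∑ s', P t (π t) s' * (Vstar t - Vπ t) = Vstar t - Vπ t := hsum_const _ _ _
    have h3 : ∑ s', P t (π t) s' * (Vstar s' - Vπ s') =
        (∑ s', P t (π t) s' * Vstar s') - ∑ s', P t (π t) s' * Vπ s' := by
      rw [← Finset.sum_sub_distrib]; exact Finset.sum_congr rfl fun s' _ => by ring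
    have h4 := hQleV t (π t)
    rw [hQ t (π t)] at h4
    have h5 := hVπ t
    have h6 : γ * (Vstar t - Vπ t) ≤ Vstar t - Vπ t := by nlinarith
    intro s
    have : 0 ≤ Vstar t - Vπ t := by nlinarith
    have := le_trans this (ht s (mem_univ s))
    linarith
  have hPπ : ∀ s s', Pπ s s' = P s (π s) s' := fun _ _ => rfl
  -- matrix power facts
  have hpow0 : ∀ (i : ℕ) (s s' : S), 0 ≤ (Pπ ^ i) s s' := by
    intro i
    induction i with
    | zero =>
      intro s s'
      simp only [pow_zero, Matrix.one_apply]
      split <;> norm_num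
    | succ n ih =>
      intro s s'
      rw [pow_succ, Matrix.mul_apply]
      exact Finset.sum_nonneg fun t _ => mul_nonneg (ih s t) (hP0 t (π t) s')
  have hpow1 : ∀ (i : ℕ) (s : S), ∑ s', (Pπ ^ i) s s' = 1 := by
    intro i
    induction i with
    | zero =>
      intro s
      simp [Matrix.one_apply]
    | succ n ih =>
      intro s
      simp only [pow_succ, Matrix.mul_apply]
      rw [Finset.sum_comm]
      calc ∑ t, ∑ s', (Pπ ^ n) s t * Pπ t s'
          = ∑ t, (Pπ ^ n) s t * ∑ s', P t (π t) s' := by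
            exact Finset.sum_congr rfl fun t _ => by rw [Finset.mul_sum]
        _ = ∑ t, (Pπ ^ n) s t := by
            exact Finset.sum_congr rfl fun t _ => by rw [hP1, mul_one]
        _ = 1 := ih s
  set d : S → ℝ := fun s => ∑ i ∈ Finset.range H, γ ^ i * (Pπ ^ i) s₀ s with hddef
  have hd0 : ∀ s, 0 ≤ d s := fun s =>
    Finset.sum_nonneg fun i _ => mul_nonneg (pow_nonneg hγ0.le i) (hpow0 i s₀ s)
  -- reduce LHS
  have hred : (∑ s, ∑ a, w s a * Var s a) = ∑ s, d s * Var s (π s) := by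
    refine Finset.sum_congr rfl fun s _ => ?_
    rw [Finset.sum_eq_single (π s)]
    · have hwd : w s (π s) = d s := if_pos rfl
      rw [hwd]
    · intro a _ ha
      have : w s a = 0 := if_neg ha
      rw [this, zero_mul]
    · intro h; exact absurd (mem_univ _) h
  set q : S → ℝ := fun s => Qstar s (π s) with hqdef
  set gap : S → ℝ := fun s => Vstar s - q s with hgapdef
  have hgap0 : ∀ s, 0 ≤ gap s := fun s => by
    have := hQleV s (π s); simp only [hgapdef, hqdef]; linarith
  have hq : ∀ s, γ * (∑ s', P s (π s) s' * Vstar s') = q s - r s (π s) := by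
    intro s
    have := hQ s (π s)
    simp only [hqdef]
    linarith
  -- per-state key inequality
  have key : ∀ s, γ ^ 2 * Var s (π s) ≤
      γ ^ 2 * (∑ s', P s (π s) s' * (Vstar s') ^ 2) - (Vstar s) ^ 2
        + 2 * M * (gap s + 1) := by
    intro s
    have h1 := hq s
    have hVs : Var s (π s) =
        (∑ s', P s (π s) s' * (Vstar s') ^ 2) - (∑ s', P s (π s) s' * Vstar s') ^ 2 := rfl
    set X := ∑ s', P s (π s) s' * Vstar s' with hX
    have h2 : (γ * X) ^ 2 = (Vstar s - (gap s + r s (π s))) ^ 2 := by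
      rw [h1]; simp only [hgapdef]; ring
    have hg := hgap0 s
    have hv0 := hVlb s
    have hvM := hVub s
    have hr0' := hr0 s (π s)
    have hr1' := hr1 s (π s)
    rw [hVs]
    nlinarith [sq_nonneg (gap s + r s (π s)), sq_nonneg (γ * X)]
  -- u i  and term A
  set u : ℕ → ℝ := fun i => ∑ s, (Pπ ^ i) s₀ s * (Vstar s) ^ 2 with hudef
  have hu0 : ∀ i, 0 ≤ u i := fun i =>
    Finset.sum_nonneg fun s _ => mul_nonneg (hpow0 i s₀ s) (sq_nonneg _)
  have huM : ∀ i, u i ≤ M ^ 2 := by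
    intro i
    calc u i ≤ ∑ s, (Pπ ^ i) s₀ s * M ^ 2 :=
          Finset.sum_le_sum fun s _ => mul_le_mul_of_nonneg_left
            (by nlinarith [hVlb s, hVub s]) (hpow0 i s₀ s)
      _ = M ^ 2 := by rw [← Finset.sum_mul, hpow1, one_mul]
  have hstep : ∀ i, ∑ s, (Pπ ^ i) s₀ s * (∑ s', P s (π s) s' * (Vstar s') ^ 2) = u (i + 1) := by
    intro i
    have h1 : u (i + 1) = ∑ s', (∑ t, (Pπ ^ i) s₀ t * Pπ t s') * (Vstar s') ^ 2 := by
      simp only [hudef, pow_succ, Matrix.mul_apply]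
    rw [h1]
    simp_rw [Finset.sum_mul, Finset.mul_sum]
    rw [Finset.sum_comm]
    refine Finset.sum_congr rfl fun s _ => Finset.sum_congr rfl fun s' _ => ?_
    rw [hPπ]; ring
  -- Term A bound
  have hA : ∑ s, d s * (γ ^ 2 * (∑ s', P s (π s) s' * (Vstar s') ^ 2) - (Vstar s) ^ 2)
      ≤ M ^ 2 := by
    have h1 : ∑ s, d s * (γ ^ 2 * (∑ s', P s (π s) s' * (Vstar s') ^ 2) - (Vstar s) ^ 2)
        = ∑ i ∈ Finset.range H, γ ^ i * (γ ^ 2 * u (i + 1) - u i) := by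
      simp only [hddef]
      simp_rw [Finset.sum_mul]
      rw [Finset.sum_comm]
      refine Finset.sum_congr rfl fun i _ => ?_
      have e : ∀ s, (γ ^ i * (Pπ ^ i) s₀ s) *
          (γ ^ 2 * (∑ s', P s (π s) s' * (Vstar s') ^ 2) - (Vstar s) ^ 2)
          = γ ^ i * (γ ^ 2 * ((Pπ ^ i) s₀ s * (∑ s', P s (π s) s' * (Vstar s') ^ 2))
            - (Pπ ^ i) s₀ s * (Vstar s) ^ 2) := fun s => by ring
      rw [Finset.sum_congr rfl fun s _ => e s]
      rw [← Finset.mul_sum]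
      congr 1
      rw [Finset.sum_sub_distrib]
      congr 1
      rw [← Finset.mul_sum, hstep i]
    have h2 : ∀ i ∈ Finset.range H, γ ^ i * (γ ^ 2 * u (i + 1) - u i)
        ≤ γ ^ (i + 1) * u (i + 1) - γ ^ i * u i := by
      intro i _
      have hp : γ ^ (i + 2) ≤ γ ^ (i + 1) := pow_le_pow_of_le_one hγ0.le hγ1.le (by omega)
      have h := mul_le_mul_of_nonneg_right hp (hu0 (i + 1))
      have e1 : γ ^ (i + 2) * u (i + 1) = γ ^ i * (γ ^ 2 * u (i + 1)) := by ring
      rw [e1] at h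
      nlinarith [h]
    calc ∑ s, d s * (γ ^ 2 * (∑ s', P s (π s) s' * (Vstar s') ^ 2) - (Vstar s) ^ 2)
        = ∑ i ∈ Finset.range H, γ ^ i * (γ ^ 2 * u (i + 1) - u i) := h1
      _ ≤ ∑ i ∈ Finset.range H, (γ ^ (i + 1) * u (i + 1) - γ ^ i * u i) :=
          Finset.sum_le_sum h2
      _ = γ ^ H * u H - γ ^ 0 * u 0 := Finset.sum_range_sub (fun i => γ ^ i * u i) H
      _ ≤ M ^ 2 := by
          have h3 : γ ^ H * u H ≤ 1 * u H :=
            mul_le_mul_of_nonneg_right (pow_le_one₀ hγ0.le hγ1.le) (hu0 H)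
          have h4 := huM H
          have h5 := hu0 0
          simp only [pow_zero, one_mul] at h3 ⊢
          linarith
  -- gap sum induction
  have hgapsum : ∀ (n : ℕ) (s : S),
      (∑ i ∈ Finset.range n, γ ^ i * ∑ s', (Pπ ^ i) s s' * gap s') ≤ Vstar s - Vπ s := by
    intro n
    induction n with
    | zero => intro s; simp; linarith [hVπleV s]
    | succ n ih =>
      intro s
      rw [Finset.sum_range_succ']
      have h0 : γ ^ 0 * ∑ s', (Pπ ^ 0) s s' * gap s' = gap s := by
        simp [Matrix.one_apply]
      have hterm : ∀ i, γ ^ (i + 1) * ∑ s', (Pπ ^ (i + 1)) s s' * gap s'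
          = γ * ∑ t, Pπ s t * (γ ^ i * ∑ s', (Pπ ^ i) t s' * gap s') := by
        intro i
        have hm : ∀ s', (Pπ ^ (i + 1)) s s' = ∑ t, Pπ s t * (Pπ ^ i) t s' := by
          intro s'
          rw [pow_succ', Matrix.mul_apply]
        simp_rw [hm, Finset.sum_mul, Finset.mul_sum]
        rw [Finset.sum_comm]
        refine Finset.sum_congr rfl fun t _ => Finset.sum_congr rfl fun s' _ => by ring
      calc (∑ i ∈ Finset.range n, γ ^ (i + 1) * ∑ s', (Pπ ^ (i + 1)) s s' * gap s')
            + γ ^ 0 * ∑ s', (Pπ ^ 0) s s' * gap s'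
          = γ * (∑ t, Pπ s t * (∑ i ∈ Finset.range n, γ ^ i * ∑ s', (Pπ ^ i) t s' * gap s'))
            + gap s := by
            rw [h0]
            congr 1
            rw [Finset.sum_congr rfl fun i _ => hterm i, ← Finset.mul_sum]
            congr 1
            rw [Finset.sum_comm]
            exact Finset.sum_congr rfl fun t _ => (Finset.mul_sum _ _ _).symm
        _ ≤ γ * (∑ t, Pπ s t * (Vstar t - Vπ t)) + gap s := by
            have h6 : ∑ t, Pπ s t * (∑ i ∈ Finset.range n, γ ^ i * ∑ s', (Pπ ^ i) t s' * gap s')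
                ≤ ∑ t, Pπ s t * (Vstar t - Vπ t) :=
              Finset.sum_le_sum fun t _ => mul_le_mul_of_nonneg_left (ih t) (hP0 s (π s) t)
            have := mul_le_mul_of_nonneg_left h6 hγ0.le
            linarith
        _ = Vstar s - Vπ s := by
            have h3 : ∑ t, Pπ s t * (Vstar t - Vπ t)
                = (∑ t, P s (π s) t * Vstar t) - ∑ t, P s (π s) t * Vπ t := by
              rw [← Finset.sum_sub_distrib]
              exact Finset.sum_congr rfl fun t _ => by rw [hPπ]; ring
            rw [h3, mul_sub]
            have h4 := hq s
            have h5 := hVπ s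
            simp only [hgapdef]
            linarith
  have hdgap : ∑ s, d s * gap s ≤ Vstar s₀ - Vπ s₀ := by
    have h1 : ∑ s, d s * gap s = ∑ i ∈ Finset.range H, γ ^ i * ∑ s', (Pπ ^ i) s₀ s' * gap s' := by
      simp only [hddef]
      simp_rw [Finset.sum_mul]
      rw [Finset.sum_comm]
      refine Finset.sum_congr rfl fun i _ => ?_
      rw [Finset.mul_sum]
      exact Finset.sum_congr rfl fun s _ => by ring
    rw [h1]
    exact hgapsum H s₀
  have hdsum : ∑ s, d s ≤ M := by
    have h1 : ∑ s, d s = ∑ i ∈ Finset.range H, γ ^ i := by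
      simp only [hddef]
      rw [Finset.sum_comm]
      exact Finset.sum_congr rfl fun i _ => by rw [← Finset.mul_sum, hpow1, mul_one]
    rw [h1]
    have h2 := geom_sum_mul γ H
    nlinarith [pow_nonneg hγ0.le H]
  -- crude variance bound
  have hVarle : ∀ s, Var s (π s) ≤ M ^ 2 / 4 := by
    intro s
    have h1 : ∑ s', P s (π s) s' * (Vstar s') ^ 2 ≤ ∑ s', P s (π s) s' * (M * Vstar s') :=
      hsum_mono s (π s) _ _ fun s' => by nlinarith [hVlb s', hVub s']
    have h2 : ∑ s', P s (π s) s' * (M * Vstar s')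
        = M * ∑ s', P s (π s) s' * Vstar s' := by
      rw [Finset.mul_sum]
      exact Finset.sum_congr rfl fun s' _ => by ring
    have hVs : Var s (π s) = (∑ s', P s (π s) s' * (Vstar s') ^ 2)
        - (∑ s', P s (π s) s' * Vstar s') ^ 2 := rfl
    rw [hVs]
    exact stmt13_aux_quad M _ _ (le_trans h1 (le_of_eq h2))
  have hcrude : ∑ s, d s * Var s (π s) ≤ M ^ 2 / 4 * M := by
    calc ∑ s, d s * Var s (π s) ≤ ∑ s, d s * (M ^ 2 / 4) :=
          Finset.sum_le_sum fun s _ => mul_le_mul_of_nonneg_left (hVarle s) (hd0 s)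
      _ = (∑ s, d s) * (M ^ 2 / 4) := (Finset.sum_mul Finset.univ d (M ^ 2 / 4)).symm
      _ ≤ M * (M ^ 2 / 4) := mul_le_mul_of_nonneg_right hdsum (by positivity)
      _ = M ^ 2 / 4 * M := by ring
  -- main bound
  have hΔ0 : 0 ≤ Vstar s₀ - Vπ s₀ := by linarith [hVπleV s₀]
  have hΔM : Vstar s₀ - Vπ s₀ ≤ M := by linarith [hVub s₀, hVπlb s₀]
  have hmain : γ ^ 2 * (∑ s, d s * Var s (π s)) ≤
      3 * M ^ 2 + 2 * M * (Vstar s₀ - Vπ s₀) := by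
    have h1 : γ ^ 2 * (∑ s, d s * Var s (π s)) = ∑ s, d s * (γ ^ 2 * Var s (π s)) := by
      rw [Finset.mul_sum]
      exact Finset.sum_congr rfl fun s _ => by ring
    rw [h1]
    have h2 : ∑ s, d s * (γ ^ 2 * Var s (π s)) ≤
        ∑ s, d s * (γ ^ 2 * (∑ s', P s (π s) s' * (Vstar s') ^ 2) - (Vstar s) ^ 2
          + 2 * M * (gap s + 1)) :=
      Finset.sum_le_sum fun s _ => mul_le_mul_of_nonneg_left (key s) (hd0 s)
    have h3 : ∑ s, d s * (γ ^ 2 * (∑ s', P s (π s) s' * (Vstar s') ^ 2) - (Vstar s) ^ 2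
          + 2 * M * (gap s + 1))
        = (∑ s, d s * (γ ^ 2 * (∑ s', P s (π s) s' * (Vstar s') ^ 2) - (Vstar s) ^ 2))
          + 2 * M * (∑ s, d s * gap s) + 2 * M * (∑ s, d s) := by
      rw [Finset.mul_sum, Finset.mul_sum, ← Finset.sum_add_distrib, ← Finset.sum_add_distrib]
      exact Finset.sum_congr rfl fun s _ => by ring
    have h4 := mul_le_mul_of_nonneg_left hdgap (by positivity : (0:ℝ) ≤ 2 * M)
    have h5 := mul_le_mul_of_nonneg_left hdsum (by positivity : (0:ℝ) ≤ 2 * M)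
    linarith [hA, h2, h3, h4, h5]
  have hfirst : ∑ s, d s * Var s (π s)
      ≤ 2 * M ^ 2 + 2 * (H:ℝ) * M + 2 * M * (Vstar s₀ - Vπ s₀) := by
    rcases le_or_gt γ (15 / 16) with hc | hc
    · have hM16 : M ≤ 16 := by
        rw [hMdef, div_le_iff₀ hγ01]
        linarith
      exact stmt13_aux_crude M _ _ _ hMpos hM16 hMH hΔ0 hcrude
    · rcases le_or_gt (∑ s, d s * Var s (π s)) 0 with hL | hL
      · exact stmt13_aux_neg M _ _ _ hMpos hMH hΔ0 hL
      · exact stmt13_aux_high γ M _ _ _ hc hMpos hMH hΔ0 hΔM hL hmain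
  constructor
  · rw [hred]
    refine le_trans hfirst (le_of_eq ?_)
    have e : (2:ℝ) / (1 - γ) ^ 2 = 2 * (1 / (1 - γ)) ^ 2 := by
      rw [div_pow, one_pow, mul_one_div]
    rw [hMdef, e]
    ring
  · rw [hred]
    exact stmt13_aux_six M _ _ _ hMpos hMH hΔ0 hΔM hfirst
end
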